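/- arXiv:2511.14660 — 11 statements merged into one kernel-verified Lean document; each statement's English description precedes it below -/
import Mathlib

section
/- The family of additively piecewise syndetic subsets of ℕ is strongly partition regular: if A is additively piecewise syndetic and A = C₁ ∪ … ∪ C_r, then some Cᵢ is additively piecewise syndetic. -/
/-!
A set is piecewise syndetic iff, for some `k`, the points lying within `k` to the left of it form
a thick set. If `A ⊆ B ∪ C` with `A` piecewise syndetic and `C` not, then for every `L` the
`(L + k)`-neighbourhood of `C` has bounded gaps in its complement, so a long enough interval of
the `k`-neighbourhood of `A` contains a block `[y, y + L)` whose `A`-witnesses all avoid `C` and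
hence lie in `B`. Induction on the number of pieces finishes the proof.
-/

def AddThick (T : Set ℕ) : Prop := ∀ k : ℕ, ∃ x : ℕ, ∀ i < k, x + i ∈ T

def AddSyndetic (A : Set ℕ) : Prop := ∃ k : ℕ, 0 < k ∧ ∀ x : ℕ, ∃ i < k, x + i ∈ A

/-- `A` is additively piecewise syndetic: it is the intersection of an additively
syndetic set with an additively thick set. -/
def AddPiecewiseSyndetic (A : Set ℕ) : Prop :=
  ∃ S T : Set ℕ, AddSyndetic S ∧ AddThick T ∧ A = S ∩ T

def lowerNbhd (k : ℕ) (A : Set ℕ) : Set ℕ := {x | ∃ i < k, x + i ∈ A}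

lemma AddPiecewiseSyndetic.exists_addThick_lowerNbhd {A : Set ℕ}
    (hA : AddPiecewiseSyndetic A) : ∃ k, 0 < k ∧ AddThick (lowerNbhd k A) := by
  obtain ⟨S, T, ⟨k, hk, hS⟩, hT, rfl⟩ := hA
  refine ⟨k, hk, fun L => ?_⟩
  obtain ⟨x, hx⟩ := hT (L + k)
  refine ⟨x, fun j hj => ?_⟩
  obtain ⟨i, hi, hiS⟩ := hS (x + j)
  exact ⟨i, hi, hiS, by rw [add_assoc]; exact hx (j + i) (by omega)⟩

lemma addPiecewiseSyndetic_of_addThick_lowerNbhd {A : Set ℕ} {k : ℕ} (hk : 0 < k)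
    (hthick : AddThick (lowerNbhd k A)) : AddPiecewiseSyndetic A := by
  refine ⟨A ∪ {x | ∀ i < k, x + i ∉ A}, lowerNbhd k A, ⟨k, hk, fun x => ?_⟩, hthick, ?_⟩
  · by_cases h : ∃ i < k, x + i ∈ A
    · obtain ⟨i, hi, hiA⟩ := h
      exact ⟨i, hi, Or.inl hiA⟩
    · exact ⟨0, hk, Or.inr fun i hi hiA => h ⟨i, hi, hiA⟩⟩
  · ext x
    constructor
    · intro hx
      exact ⟨Or.inl hx, 0, hk, by simpa using hx⟩
    · rintro ⟨hx | hx, i, hi, hiA⟩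
      · exact hx
      · exact absurd hiA (hx i hi)

lemma addPiecewiseSyndetic_iff_exists_addThick_lowerNbhd (A : Set ℕ) :
    AddPiecewiseSyndetic A ↔ ∃ k, 0 < k ∧ AddThick (lowerNbhd k A) :=
  ⟨AddPiecewiseSyndetic.exists_addThick_lowerNbhd,
    fun ⟨_, hk, hthick⟩ => addPiecewiseSyndetic_of_addThick_lowerNbhd hk hthick⟩

lemma AddPiecewiseSyndetic.nonempty {A : Set ℕ} (hA : AddPiecewiseSyndetic A) :
    A.Nonempty := by
  obtain ⟨k, -, hthick⟩ := hA.exists_addThick_lowerNbhd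
  obtain ⟨x, hx⟩ := hthick 1
  obtain ⟨i, -, hiA⟩ := hx 0 one_pos
  exact ⟨_, hiA⟩

lemma AddPiecewiseSyndetic.or_of_subset_union {A B C : Set ℕ} (hA : AddPiecewiseSyndetic A)
    (hsub : A ⊆ B ∪ C) : AddPiecewiseSyndetic B ∨ AddPiecewiseSyndetic C := by
  refine or_iff_not_imp_right.2 fun hC => ?_
  obtain ⟨k, hk, hthick⟩ := hA.exists_addThick_lowerNbhd
  refine addPiecewiseSyndetic_of_addThick_lowerNbhd hk fun L => ?_
  have hgaps : ¬ AddThick (lowerNbhd (L + k) C) := fun h =>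
    hC (addPiecewiseSyndetic_of_addThick_lowerNbhd (by omega) h)
  simp only [AddThick, not_forall, not_exists] at hgaps
  obtain ⟨ℓ, hℓ⟩ := hgaps
  obtain ⟨x, hx⟩ := hthick (ℓ + (L + k))
  obtain ⟨i, hi, hiC⟩ := hℓ x
  refine ⟨x + i, fun m hm => ?_⟩
  obtain ⟨p, hp, hpA⟩ : x + i + m ∈ lowerNbhd k A := by
    simpa only [add_assoc] using hx (i + m) (by omega)
  refine ⟨p, hp, (hsub hpA).resolve_right fun hpC => hiC ⟨m + p, by omega, ?_⟩⟩
  simpa only [add_assoc] using hpC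

lemma AddPiecewiseSyndetic.exists_of_subset_biUnion {ι : Type*} {A : Set ℕ}
    (hA : AddPiecewiseSyndetic A) {C : ι → Set ℕ} (s : Finset ι) (hsub : A ⊆ ⋃ i ∈ s, C i) :
    ∃ i ∈ s, AddPiecewiseSyndetic (C i) := by
  classical
  induction s using Finset.induction_on generalizing A with
  | empty =>
    obtain ⟨a, ha⟩ := hA.nonempty
    simpa using hsub ha
  | insert j s _ ih =>
    rw [Finset.set_biUnion_insert] at hsub
    rcases hA.or_of_subset_union hsub with hj | hs
    · exact ⟨j, Finset.mem_insert_self j s, hj⟩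
    · obtain ⟨i, hi, hCi⟩ := ih hs subset_rfl
      exact ⟨i, Finset.mem_insert_of_mem hi, hCi⟩

theorem addPiecewiseSyndetic_strongly_partition_regular_general
    (A : Set ℕ) (hA : AddPiecewiseSyndetic A) (r : ℕ) (C : Fin r → Set ℕ)
    (hcover : A = ⋃ i, C i) :
    ∃ i, AddPiecewiseSyndetic (C i) := by
  obtain ⟨i, -, hi⟩ := hA.exists_of_subset_biUnion (C := C) Finset.univ (by simp [hcover])
  exact ⟨i, hi⟩

/-- Strong partition regularity of additively piecewise syndetic sets: any finite
partition of an additively piecewise syndetic set has an additively piecewise syndetic piece. -/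
theorem addPiecewiseSyndetic_strongly_partition_regular
    (A : Set ℕ) (hA : AddPiecewiseSyndetic A) (r : ℕ) (C : Fin r → Set ℕ)
    (hcover : A = ⋃ i, C i)
    (hdisj : ∀ i j, i ≠ j → C i ∩ C j = ∅) :
    ∃ i, AddPiecewiseSyndetic (C i) :=
  addPiecewiseSyndetic_strongly_partition_regular_general A hA r C hcover
end

section
/- For every nonempty family F ⊆ P(X), the family F' = {A ∩ B : A ∈ F, Bᶜ ∉ F} is partition regular on X: for every finite partition X = C₁ ∪ … ∪ C_r, some Cᵢ contains an element of F' as a subset; more precisely any finite partition of a member of F' has a piece containing a member of F'. -/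
/-!
A member `A ∩ B` of `F'` (with `Bᶜ ∉ F`) meets every piece `S` in one of two ways: if
`Bᶜ ∪ S ∈ F`, then `(Bᶜ ∪ S) ∩ B ⊆ S` is itself in `F'`; otherwise `(B \ S)ᶜ = Bᶜ ∪ S ∉ F`,
so `A ∩ (B \ S) ∈ F'` and we may discard `S`. Discarding the pieces one at a time must stop,
because members of `F'` are nonempty when `F` is upward closed.
-/

/-- Given a family `F` of subsets of `X`, the derived family
`F' = {A ∩ B : A ∈ F, Bᶜ ∉ F}`. -/
def DerivedFamily {X : Type*} (F : Set (Set X)) : Set (Set X) :=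
  {D | ∃ A ∈ F, ∃ B : Set X, Bᶜ ∉ F ∧ D = A ∩ B}

namespace DerivedFamily

variable {X : Type*} {F : Set (Set X)} {D : Set X}

theorem nonempty_of_mem (hF : IsUpperSet F) (hD : D ∈ DerivedFamily F) : D.Nonempty := by
  obtain ⟨A, hA, B, hB, rfl⟩ := hD
  refine Set.nonempty_iff_ne_empty.2 fun h => hB (hF ?_ hA)
  exact Set.subset_compl_iff_disjoint_right.2 (Set.disjoint_iff_inter_eq_empty.2 h)

theorem exists_subset_or_diff_mem (hD : D ∈ DerivedFamily F) (S : Set X) :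
    (∃ E ∈ DerivedFamily F, E ⊆ S) ∨ D \ S ∈ DerivedFamily F := by
  obtain ⟨A, hA, B, hB, rfl⟩ := hD
  by_cases hS : Bᶜ ∪ S ∈ F
  · exact .inl ⟨(Bᶜ ∪ S) ∩ B, ⟨_, hS, B, hB, rfl⟩, fun x ⟨hx, hxB⟩ => hx.resolve_left (· hxB)⟩
  · refine .inr ⟨A, hA, B \ S, ?_, by rw [Set.inter_sdiff_assoc]⟩
    rwa [Set.sdiff_eq, Set.compl_inter, compl_compl]

theorem exists_subset_of_subset_biUnion (hF : IsUpperSet F) {ι : Type*} (s : Finset ι)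
    (C : ι → Set X) (hD : D ∈ DerivedFamily F) (hcover : D ⊆ ⋃ i ∈ s, C i) :
    ∃ i ∈ s, ∃ E ∈ DerivedFamily F, E ⊆ C i := by
  classical
  induction s using Finset.induction_on generalizing D with
  | empty =>
    obtain ⟨x, hx⟩ := nonempty_of_mem hF hD
    simpa using hcover hx
  | insert a s _ ih =>
    rcases exists_subset_or_diff_mem hD (C a) with hE | hdiff
    · exact ⟨a, s.mem_insert_self a, hE⟩
    · have hcover' : D \ C a ⊆ ⋃ i ∈ s, C i := by
        rw [Set.sdiff_subset_iff, ← Finset.set_biUnion_insert]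
        exact hcover
      obtain ⟨i, hi, hE⟩ := ih hdiff hcover'
      exact ⟨i, Finset.mem_insert_of_mem hi, hE⟩

end DerivedFamily

theorem derivedFamily_partition_regular_general {X : Type*} (F : Set (Set X))
    (hup : ∀ A B : Set X, A ∈ F → A ⊆ B → B ∈ F)
    (D : Set X) (hD : D ∈ DerivedFamily F)
    (r : ℕ) (C : Fin r → Set X)
    (hcover : D = ⋃ i, C i) :
    ∃ i, ∃ E ∈ DerivedFamily F, E ⊆ C i := by
  have hF : IsUpperSet F := fun _ _ hAB hA => hup _ _ hA hAB
  obtain ⟨i, -, hE⟩ := DerivedFamily.exists_subset_of_subset_biUnion hF Finset.univ C hD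
    (by simp [hcover])
  exact ⟨i, hE⟩

/-- For every nonempty upward-closed family `F ⊆ P(X)`, the family
`F' = {A ∩ B : A ∈ F, Bᶜ ∉ F}` is partition regular: any finite partition of a
member of `F'` has a piece containing a member of `F'`. -/
theorem derivedFamily_partition_regular {X : Type*} (F : Set (Set X))
    (hne : F.Nonempty)
    (hup : ∀ A B : Set X, A ∈ F → A ⊆ B → B ∈ F)
    (D : Set X) (hD : D ∈ DerivedFamily F)
    (r : ℕ) (C : Fin r → Set X)
    (hcover : D = ⋃ i, C i)
    (hdisj : ∀ i j, i ≠ j → C i ∩ C j = ∅) :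
    ∃ i, ∃ E ∈ DerivedFamily F, E ⊆ C i :=
  derivedFamily_partition_regular_general F hup D hD r C hcover
end

section
/- Every additively thick subset of ℕ is Delta-large: if T ⊆ ℕ contains arbitrarily long intervals, then there exists an infinite set X ⊆ ℕ with Δ(X) = {x' − x : x < x', x, x' ∈ X} ⊆ T. -/
lemma AddThick.exists_gt_forall_sub_mem {T : Set ℕ} (hT : AddThick T) (m : ℕ) :
    ∃ y, m < y ∧ ∀ x ≤ m, y - x ∈ T := by
  obtain ⟨a, ha⟩ := hT (m + 2)
  refine ⟨a + (m + 1), by omega, fun x hx => ?_⟩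
  rw [show a + (m + 1) - x = a + (m + 1 - x) by omega]
  exact ha _ (by omega)

section Orbit

variable {f : ℕ → ℕ}

lemma strictMono_iterate_of_lt_self (hf : ∀ m, m < f m) (a : ℕ) :
    StrictMono fun n => f^[n] a :=
  strictMono_nat_of_lt_succ fun n => by
    simpa only [Function.iterate_succ_apply'] using hf (f^[n] a)

lemma iterate_sub_iterate_mem {T : Set ℕ} (hf_gt : ∀ m, m < f m)
    (hf_sub : ∀ m, ∀ x ≤ m, f m - x ∈ T) (a : ℕ) {i j : ℕ} (hij : i < j) :
    f^[j] a - f^[i] a ∈ T := by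
  obtain ⟨k, rfl⟩ := Nat.exists_eq_add_of_lt hij
  rw [Function.iterate_succ_apply']
  exact hf_sub _ _ ((strictMono_iterate_of_lt_self hf_gt a).monotone (Nat.le_add_right i k))

end Orbit

/-- Every additively thick set is Delta-large: it contains all positive differences
of some infinite set `X`. -/
theorem addThick_is_delta_large (T : Set ℕ) (hT : AddThick T) :
    ∃ X : Set ℕ, X.Infinite ∧ ∀ x ∈ X, ∀ y ∈ X, x < y → y - x ∈ T := by
  choose f hf_gt hf_sub using hT.exists_gt_forall_sub_mem
  have hmono := strictMono_iterate_of_lt_self hf_gt 0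
  refine ⟨Set.range fun n => f^[n] 0, Set.infinite_range_of_injective hmono.injective, ?_⟩
  rintro _ ⟨i, rfl⟩ _ ⟨j, rfl⟩ hlt
  exact iterate_sub_iterate_mem hf_gt hf_sub 0 (hmono.lt_iff_lt.mp hlt)
end

section
/- The family of Delta-large subsets of ℕ is strongly partition regular: if A ⊇ Δ(X) for some infinite X ⊆ ℕ and A = C₁ ∪ … ∪ C_r, then some Cᵢ contains Δ(Y) for an infinite Y ⊆ ℕ. -/
/-- The Delta-set of `S`: the set of positive differences of elements of `S`. -/
def DeltaSet (S : Set ℕ) : Set ℕ := {d | ∃ x ∈ S, ∃ y ∈ S, x < y ∧ y - x = d}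

/-- Pigeonhole: a function from an infinite type of naturals to `Fin r` has an
infinite fiber. -/
lemma exists_infinite_fiber' {r : ℕ} (f : ℕ → Fin r) (S : Set ℕ) (hS : S.Infinite) :
    ∃ i, {n ∈ S | f n = i}.Infinite := by
  by_contra h
  push_neg at h
  have : S = ⋃ i, {n ∈ S | f n = i} := by
    ext n; simp [Set.mem_iUnion]
  exact hS (this ▸ Set.finite_iUnion h)

/-- One step of the Ramsey construction. -/
lemma ramsey_step {r : ℕ} [NeZero r] (c : ℕ → ℕ → Fin r) (a : ℕ) (S : Set ℕ)
    (hS : S.Infinite) : ∃ p : Fin r × Set ℕ, p.2 ⊆ S ∧ p.2.Infinite ∧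
      ∀ b ∈ p.2, a < b ∧ c a b = p.1 := by
  have h1 : {b ∈ S | a < b}.Infinite := by
    have : {b ∈ S | a < b} = S \ {b | b ≤ a} := by
      ext b; simp only [Set.mem_setOf_eq, Set.mem_diff, Set.mem_sep_iff, not_le]
    rw [this]
    exact hS.diff (Set.finite_le_nat a)
  obtain ⟨i, hi⟩ := exists_infinite_fiber' (c a) _ h1
  exact ⟨(i, {n ∈ {b ∈ S | a < b} | c a n = i}), fun b hb => hb.1.1, hi,
    fun b hb => ⟨hb.1.2, hb.2⟩⟩

/-- Infinite Ramsey theorem for pairs. -/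
lemma ramsey_pairs {r : ℕ} [NeZero r] (c : ℕ → ℕ → Fin r) (S : Set ℕ)
    (hS : S.Infinite) : ∃ i, ∃ T ⊆ S, T.Infinite ∧
      ∀ x ∈ T, ∀ y ∈ T, x < y → c x y = i := by
  classical
  let next : {S : Set ℕ // S.Infinite} → {S : Set ℕ // S.Infinite} := fun p =>
    ⟨(ramsey_step c (sInf p.1) p.1 p.2).choose.2,
      (ramsey_step c (sInf p.1) p.1 p.2).choose_spec.2.1⟩
  let seq : ℕ → {S : Set ℕ // S.Infinite} := fun n => next^[n] ⟨S, hS⟩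
  have hseq : ∀ n, seq (n + 1) = next (seq n) := fun n => by
    simp only [seq, Function.iterate_succ_apply']
  let a : ℕ → ℕ := fun n => sInf (seq n).1
  let col : ℕ → Fin r := fun n =>
    (ramsey_step c (sInf (seq n).1) (seq n).1 (seq n).2).choose.1
  have amem : ∀ n, a n ∈ (seq n).1 := fun n => Nat.sInf_mem (seq n).2.nonempty
  have hstep : ∀ n, ∀ b ∈ (seq (n + 1)).1,
      (seq (n+1)).1 ⊆ (seq n).1 ∧ a n < b ∧ c (a n) b = col n := by
    intro n b hb
    have hspec := (ramsey_step c (sInf (seq n).1) (seq n).1 (seq n).2).choose_spec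
    rw [hseq n] at hb ⊢
    exact ⟨hspec.1, (hspec.2.2 b hb).1, (hspec.2.2 b hb).2⟩
  have hsub : ∀ n, (seq (n + 1)).1 ⊆ (seq n).1 := fun n =>
    (hstep n _ (amem (n+1))).1
  have hchain : ∀ n m, n ≤ m → (seq m).1 ⊆ (seq n).1 := by
    intro n m h
    induction m with
    | zero => simp_all
    | succ k ih =>
      rcases Nat.lt_or_ge n (k+1) with h' | h'
      · exact (hsub k).trans (ih (Nat.lt_succ_iff.mp h'))
      · have : n = k + 1 := le_antisymm h h'
        subst this; rfl
  have hmono : StrictMono a := by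
    apply strictMono_nat_of_lt_succ
    intro n
    exact (hstep n _ (amem (n+1))).2.1
  have hcol : ∀ n m, n < m → c (a n) (a m) = col n := by
    intro n m h
    exact (hstep n (a m) (hchain (n+1) m h (amem m))).2.2
  obtain ⟨i, hi⟩ := exists_infinite_fiber' col Set.univ Set.infinite_univ
  refine ⟨i, a '' {n | col n = i}, ?_, ?_, ?_⟩
  · rintro x ⟨n, _, rfl⟩
    exact hchain 0 n (Nat.zero_le n) (amem n)
  · apply Set.Infinite.image (Set.injOn_of_injective hmono.injective)
    have : {n | col n = i} = {n ∈ Set.univ | col n = i} := by ext; simp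
    rw [this]; exact hi
  · rintro x ⟨n, hn, rfl⟩ y ⟨m, hm, rfl⟩ hxy
    have hnm : n < m := hmono.lt_iff_lt.mp hxy
    rw [hcol n m hnm]; exact hn

/-- Strong partition regularity of Delta-large sets: if `A ⊇ Δ(X)` for an infinite
`X` and `A = C₁ ∪ … ∪ C_r`, then some `Cᵢ` contains `Δ(Y)` for an infinite `Y`. -/
theorem deltaLarge_strongly_partition_regular
    (A : Set ℕ) (X : Set ℕ) (hX : X.Infinite) (hXA : DeltaSet X ⊆ A)
    (r : ℕ) (C : Fin r → Set ℕ) (hcover : A = ⋃ i, C i) :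
    ∃ i, ∃ Y : Set ℕ, Y.Infinite ∧ DeltaSet Y ⊆ C i := by
  classical
  -- r ≠ 0 since A is nonempty
  have hr : r ≠ 0 := by
    intro h
    subst h
    obtain ⟨x, hx⟩ := hX.nonempty
    obtain ⟨y, hy, hxy⟩ := hX.exists_gt x
    have : y - x ∈ A := hXA ⟨x, hx, y, hy, hxy, rfl⟩
    rw [hcover] at this
    simp at this
  haveI : NeZero r := ⟨hr⟩
  let c : ℕ → ℕ → Fin r := fun x y =>
    if h : ∃ i, y - x ∈ C i then h.choose else Classical.arbitrary (Fin r)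
  obtain ⟨i, T, hTS, hTinf, hT⟩ := ramsey_pairs c X hX
  refine ⟨i, T, hTinf, ?_⟩
  rintro d ⟨x, hx, y, hy, hxy, rfl⟩
  have hd : y - x ∈ A := hXA ⟨x, hTS hx, y, hTS hy, hxy, rfl⟩
  rw [hcover] at hd
  have hex : ∃ j, y - x ∈ C j := Set.mem_iUnion.mp hd
  have : c x y = hex.choose := dif_pos hex
  have hc := hT x hx y hy hxy
  rw [this] at hc
  rw [← hc]
  exact hex.choose_spec
end

section
/- Banach density is additive on pairwise disjoint shifts: if A ⊆ ℕ, x₁ < … < x_n, and (A − xᵢ) ∩ (A − xⱼ) = ∅ for all i ≠ j, then BD(⋃_{i=1}^n (A − xᵢ)) = n · BD(A). -/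
open Classical in
/-- The upper Banach density of `A ⊆ ℕ`:
`BD(A) = limsup_{m → ∞} max_x |A ∩ [x+1, x+m]| / m`. -/
noncomputable def BanachDensity (A : Set ℕ) : ℝ :=
  Filter.limsup
    (fun m : ℕ => ⨆ x : ℕ, (((Finset.Icc (x + 1) (x + m)).filter (· ∈ A)).card : ℝ) / m)
    Filter.atTop

open Classical in
/-- window count -/
noncomputable def BDcnt (A : Set ℕ) (x m : ℕ) : ℕ :=
  ((Finset.Icc (x + 1) (x + m)).filter (· ∈ A)).card

open Classical in
noncomputable def BDF (A : Set ℕ) (m : ℕ) : ℝ :=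
  ⨆ x : ℕ, (BDcnt A x m : ℝ) / m

open Classical in
example (A : Set ℕ) (m : ℕ) : BDF A m = ⨆ x : ℕ, (((Finset.Icc (x + 1) (x + m)).filter (· ∈ A)).card : ℝ) / m := rfl

lemma banachDensity_eq (A : Set ℕ) :
    BanachDensity A = Filter.limsup (BDF A) Filter.atTop := rfl

lemma BDcnt_le (A : Set ℕ) (x m : ℕ) : BDcnt A x m ≤ m := by
  classical
  calc BDcnt A x m ≤ (Finset.Icc (x+1) (x+m)).card := Finset.card_filter_le _ _
  _ = m := by rw [Nat.card_Icc]; omega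

lemma BDF_bdd (A : Set ℕ) (m : ℕ) :
    ∀ x : ℕ, (BDcnt A x m : ℝ) / m ≤ 1 := by
  intro x
  rcases Nat.eq_zero_or_pos m with h | h
  · simp [h]
  · rw [div_le_one (by exact_mod_cast h)]
    exact_mod_cast BDcnt_le A x m

lemma BDF_bddAbove (A : Set ℕ) (m : ℕ) :
    BddAbove (Set.range fun x : ℕ => (BDcnt A x m : ℝ) / m) :=
  ⟨1, by rintro _ ⟨x, rfl⟩; exact BDF_bdd A m x⟩

lemma le_BDF (A : Set ℕ) (m x : ℕ) : (BDcnt A x m : ℝ) / m ≤ BDF A m :=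
  le_ciSup (BDF_bddAbove A m) x

lemma BDF_nonneg (A : Set ℕ) (m : ℕ) : 0 ≤ BDF A m :=
  le_trans (by positivity) (le_BDF A m 0)

lemma BDF_le_one (A : Set ℕ) (m : ℕ) : BDF A m ≤ 1 :=
  ciSup_le (BDF_bdd A m)

lemma BDcnt_le_shift_add (A : Set ℕ) (m a b : ℕ) (h : a ≤ b) :
    BDcnt A a m ≤ BDcnt A b m + (b - a) := by
  classical
  unfold BDcnt
  have hsub : (Finset.Icc (a+1) (a+m)).filter (· ∈ A) ⊆
      ((Finset.Icc (b+1) (b+m)).filter (· ∈ A)) ∪ Finset.Icc (a+1) b := by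
    intro t ht
    simp only [Finset.mem_filter, Finset.mem_Icc, Finset.mem_union] at *
    obtain ⟨⟨h1, h2⟩, hA⟩ := ht
    rcases le_or_gt t b with h3 | h3
    · exact Or.inr ⟨h1, h3⟩
    · exact Or.inl ⟨⟨by omega, by omega⟩, hA⟩
  calc ((Finset.Icc (a+1) (a+m)).filter (· ∈ A)).card
      ≤ (((Finset.Icc (b+1) (b+m)).filter (· ∈ A)) ∪ Finset.Icc (a+1) b).card :=
        Finset.card_le_card hsub
    _ ≤ ((Finset.Icc (b+1) (b+m)).filter (· ∈ A)).card + (Finset.Icc (a+1) b).card :=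
        Finset.card_union_le _ _
    _ ≤ _ := by rw [Nat.card_Icc]; omega

lemma BDcnt_shift_le_add (A : Set ℕ) (m a b : ℕ) (h : a ≤ b) :
    BDcnt A b m ≤ BDcnt A a m + (b - a) := by
  classical
  unfold BDcnt
  have hsub : (Finset.Icc (b+1) (b+m)).filter (· ∈ A) ⊆
      ((Finset.Icc (a+1) (a+m)).filter (· ∈ A)) ∪ Finset.Icc (a+m+1) (b+m) := by
    intro t ht
    simp only [Finset.mem_filter, Finset.mem_Icc, Finset.mem_union] at *
    obtain ⟨⟨h1, h2⟩, hA⟩ := ht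
    rcases le_or_gt t (a+m) with h3 | h3
    · exact Or.inl ⟨⟨by omega, h3⟩, hA⟩
    · exact Or.inr ⟨by omega, h2⟩
  calc ((Finset.Icc (b+1) (b+m)).filter (· ∈ A)).card
      ≤ (((Finset.Icc (a+1) (a+m)).filter (· ∈ A)) ∪ Finset.Icc (a+m+1) (b+m)).card :=
        Finset.card_le_card hsub
    _ ≤ ((Finset.Icc (a+1) (a+m)).filter (· ∈ A)).card + (Finset.Icc (a+m+1) (b+m)).card :=
        Finset.card_union_le _ _
    _ ≤ _ := by rw [Nat.card_Icc]; omega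

lemma BDcnt_iUnion (A : Set ℕ) (n : ℕ) (x : Fin n → ℕ)
    (hdisj : ∀ i j, i ≠ j → {m : ℕ | x i + m ∈ A} ∩ {m : ℕ | x j + m ∈ A} = ∅)
    (z m : ℕ) :
    BDcnt (⋃ i, {t : ℕ | x i + t ∈ A}) z m = ∑ i, BDcnt A (z + x i) m := by
  classical
  unfold BDcnt
  have h1 : (Finset.Icc (z+1) (z+m)).filter (· ∈ ⋃ i, {t : ℕ | x i + t ∈ A})
      = Finset.univ.biUnion
          (fun i : Fin n => (Finset.Icc (z+1) (z+m)).filter (fun t => x i + t ∈ A)) := by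
    ext t
    simp only [Finset.mem_filter, Finset.mem_biUnion, Finset.mem_univ, true_and,
      Set.mem_iUnion, Set.mem_setOf_eq]
    tauto
  rw [h1, Finset.card_biUnion]
  · refine Finset.sum_congr rfl fun i _ => ?_
    have h2 : ((Finset.Icc (z+1) (z+m)).filter (fun t => x i + t ∈ A)).image (x i + ·)
        = (Finset.Icc (z + x i + 1) (z + x i + m)).filter (· ∈ A) := by
      ext s
      simp only [Finset.mem_image, Finset.mem_filter, Finset.mem_Icc]
      constructor
      · rintro ⟨t, ⟨⟨ht1, ht2⟩, hA⟩, rfl⟩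
        exact ⟨⟨by omega, by omega⟩, hA⟩
      · rintro ⟨⟨hs1, hs2⟩, hA⟩
        refine ⟨s - x i, ⟨⟨by omega, by omega⟩, ?_⟩, by omega⟩
        have hx : x i + (s - x i) = s := by omega
        rw [hx]; exact hA
    calc ((Finset.Icc (z+1) (z+m)).filter (fun t => x i + t ∈ A)).card
        = (((Finset.Icc (z+1) (z+m)).filter (fun t => x i + t ∈ A)).image (x i + ·)).card :=
          (Finset.card_image_of_injective _ (add_right_injective _)).symm
      _ = _ := by rw [h2]
  · intro i _ j _ hij
    rw [Function.onFun, Finset.disjoint_left]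
    intro t ht1 ht2
    simp only [Finset.mem_filter] at ht1 ht2
    exact Set.eq_empty_iff_forall_notMem.mp (hdisj i j hij) t ⟨ht1.2, ht2.2⟩

lemma BDF_union_le (A : Set ℕ) (n : ℕ) (x : Fin n → ℕ)
    (hdisj : ∀ i j, i ≠ j → {m : ℕ | x i + m ∈ A} ∩ {m : ℕ | x j + m ∈ A} = ∅) (m : ℕ) :
    BDF (⋃ i, {t : ℕ | x i + t ∈ A}) m ≤ n * BDF A m := by
  unfold BDF
  refine ciSup_le fun z => ?_
  rw [BDcnt_iUnion A n x hdisj z m]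
  push_cast
  rw [Finset.sum_div]
  calc ∑ i : Fin n, (BDcnt A (z + x i) m : ℝ) / m
      ≤ ∑ _i : Fin n, BDF A m := Finset.sum_le_sum fun i _ => le_BDF A m (z + x i)
    _ = n * BDF A m := by
        rw [Finset.sum_const, Finset.card_univ, Fintype.card_fin, nsmul_eq_mul]

lemma BDkey_nat (A : Set ℕ) (n : ℕ) (x : Fin n → ℕ) (hn : 0 < n)
    (hmono : StrictMono x)
    (hdisj : ∀ i j, i ≠ j → {m : ℕ | x i + m ∈ A} ∩ {m : ℕ | x j + m ∈ A} = ∅)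
    (m w : ℕ) :
    ∃ z, n * BDcnt A w m ≤
      BDcnt (⋃ i, {t : ℕ | x i + t ∈ A}) z m + 2 * n * x ⟨n - 1, by omega⟩ := by
  set X := x ⟨n - 1, by omega⟩ with hXdef
  have hX : ∀ i, x i ≤ X := by
    intro i
    exact hmono.monotone (Fin.le_def.mpr (by have := i.isLt; simp; omega))
  have hmain : ∀ z, n * BDcnt A (z + X) m ≤
      BDcnt (⋃ i, {t : ℕ | x i + t ∈ A}) z m + n * X := by
    intro z
    rw [BDcnt_iUnion A n x hdisj z m]
    calc n * BDcnt A (z + X) m = ∑ _i : Fin n, BDcnt A (z + X) m := by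
          rw [Finset.sum_const, Finset.card_univ, Fintype.card_fin, smul_eq_mul]
      _ ≤ ∑ i : Fin n, (BDcnt A (z + x i) m + X) := by
          refine Finset.sum_le_sum fun i _ => ?_
          have h1 := BDcnt_shift_le_add A m (z + x i) (z + X)
            (by have := hX i; omega)
          omega
      _ = (∑ i : Fin n, BDcnt A (z + x i) m) + n * X := by
          rw [Finset.sum_add_distrib, Finset.sum_const, Finset.card_univ,
            Fintype.card_fin, smul_eq_mul]
  have h2X : 2 * n * X = n * X + n * X := by ring
  rcases le_or_gt X w with h | h
  · refine ⟨w - X, ?_⟩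
    have := hmain (w - X)
    rw [show w - X + X = w by omega] at this
    omega
  · refine ⟨0, ?_⟩
    have h1 := hmain 0
    rw [Nat.zero_add] at h1
    have h2 := BDcnt_le_shift_add A m w X h.le
    have h3 : n * BDcnt A w m ≤ n * (BDcnt A X m + X) := Nat.mul_le_mul_left n (by omega)
    rw [Nat.mul_add] at h3
    omega

lemma BDkey_real (A : Set ℕ) (n : ℕ) (x : Fin n → ℕ) (hn : 0 < n)
    (hmono : StrictMono x)
    (hdisj : ∀ i j, i ≠ j → {m : ℕ | x i + m ∈ A} ∩ {m : ℕ | x j + m ∈ A} = ∅)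
    (m : ℕ) :
    (n : ℝ) * BDF A m ≤ BDF (⋃ i, {t : ℕ | x i + t ∈ A}) m
      + 2 * n * (x ⟨n - 1, by omega⟩ : ℝ) / m := by
  set B := ⋃ i, {t : ℕ | x i + t ∈ A} with hB
  set X : ℕ := x ⟨n - 1, by omega⟩ with hXdef
  have hn' : (0 : ℝ) < n := by exact_mod_cast hn
  rw [mul_comm, ← le_div_iff₀ hn']
  show (⨆ w : ℕ, (BDcnt A w m : ℝ) / m) ≤ _
  refine ciSup_le fun w => ?_
  rw [le_div_iff₀ hn']
  obtain ⟨z, hz⟩ := BDkey_nat A n x hn hmono hdisj m w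
  have h1 : ((n * BDcnt A w m : ℕ) : ℝ) / m ≤ ((BDcnt B z m + 2 * n * X : ℕ) : ℝ) / m := by
    rw [div_eq_mul_inv, div_eq_mul_inv]
    exact mul_le_mul_of_nonneg_right (by exact_mod_cast hz) (by positivity)
  push_cast at h1
  rw [add_div] at h1
  have h2 : (BDcnt B z m : ℝ) / m ≤ BDF B m := le_BDF B m z
  have h3 : (BDcnt A w m : ℝ) / m * n = (n : ℝ) * (BDcnt A w m) / m := by ring
  rw [h3]
  calc (n : ℝ) * (BDcnt A w m) / m = (n : ℝ) * (BDcnt A w m) / m := rfl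
    _ ≤ (BDcnt B z m : ℝ) / m + 2 * n * X / m := by rw [mul_div_assoc] at h1 ⊢; exact h1
    _ ≤ BDF B m + 2 * n * X / m := by linarith

open Filter in
/-- Banach density is additive on pairwise disjoint shifts: if the leftward shifts
`A - xᵢ` are pairwise disjoint, then `BD(⋃ᵢ (A - xᵢ)) = n · BD(A)`. -/
theorem banachDensity_union_disjoint_shifts (A : Set ℕ) (n : ℕ) (x : Fin n → ℕ)
    (hmono : StrictMono x)
    (hdisj : ∀ i j, i ≠ j → {m : ℕ | x i + m ∈ A} ∩ {m : ℕ | x j + m ∈ A} = ∅) :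
    BanachDensity (⋃ i, {m : ℕ | x i + m ∈ A}) = n * BanachDensity A := by
  set B := ⋃ i, {m : ℕ | x i + m ∈ A} with hBdef
  rw [banachDensity_eq, banachDensity_eq]
  have hBb : IsBoundedUnder (· ≤ ·) atTop (BDF B) := isBoundedUnder_of ⟨1, BDF_le_one B⟩
  have hBc : IsCoboundedUnder (· ≤ ·) atTop (BDF B) :=
    (isBoundedUnder_of (r := (· ≥ ·)) ⟨0, fun m => BDF_nonneg B m⟩).isCoboundedUnder_le
  have hAb : IsBoundedUnder (· ≤ ·) atTop (BDF A) := isBoundedUnder_of ⟨1, BDF_le_one A⟩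
  have hAc : IsCoboundedUnder (· ≤ ·) atTop (BDF A) :=
    (isBoundedUnder_of (r := (· ≥ ·)) ⟨0, fun m => BDF_nonneg A m⟩).isCoboundedUnder_le
  have hnAb : IsBoundedUnder (· ≤ ·) atTop (fun m => (n : ℝ) * BDF A m) :=
    isBoundedUnder_of ⟨n, fun m => by
      have := BDF_le_one A m
      have h0 : (0:ℝ) ≤ n := n.cast_nonneg
      nlinarith⟩
  have hnAc : IsCoboundedUnder (· ≤ ·) atTop (fun m => (n : ℝ) * BDF A m) :=
    (isBoundedUnder_of (r := (· ≥ ·)) ⟨0, fun m =>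
      mul_nonneg n.cast_nonneg (BDF_nonneg A m)⟩).isCoboundedUnder_le
  have hmul : (n : ℝ) * Filter.limsup (BDF A) atTop
      = Filter.limsup (fun m => (n : ℝ) * BDF A m) atTop := by
    exact Monotone.map_limsup_of_continuousAt (f := fun r : ℝ => (n : ℝ) * r)
      (fun a b hab => mul_le_mul_of_nonneg_left hab n.cast_nonneg) (BDF A)
      ((continuous_const.mul continuous_id).continuousAt) hAb hAc
  refine le_antisymm ?_ ?_
  · rw [hmul]
    exact limsup_le_limsup (Eventually.of_forall (BDF_union_le A n x hdisj)) hBc hnAb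
  · rcases Nat.eq_zero_or_pos n with hn | hn
    · subst hn
      rw [Nat.cast_zero, zero_mul]
      exact le_limsup_of_frequently_le
        ((Eventually.of_forall fun m => BDF_nonneg B m).frequently) hBb
    · refine _root_.le_of_forall_pos_le_add fun ε hε => ?_
      have htend : Tendsto (fun m : ℕ => 2 * (n : ℝ) * (x ⟨n - 1, by omega⟩ : ℝ) / m)
          atTop (nhds 0) := tendsto_const_div_atTop_nhds_zero_nat _
      have hev : ∀ᶠ m in atTop, (n : ℝ) * BDF A m ≤ BDF B m + ε := by
        filter_upwards [htend.eventually_lt_const hε] with m hm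
        have hk := BDkey_real A n x hn hmono hdisj m
        have h2 : (2 * n * (x ⟨n - 1, by omega⟩ : ℝ)) / m
            = 2 * (n : ℝ) * (x ⟨n - 1, by omega⟩ : ℝ) / m := by norm_num
        rw [h2] at hk
        linarith
      have hBεb : IsBoundedUnder (· ≤ ·) atTop (fun m => BDF B m + ε) :=
        isBoundedUnder_of ⟨1 + ε, fun m => by have := BDF_le_one B m; linarith⟩
      calc (n : ℝ) * Filter.limsup (BDF A) atTop
          = Filter.limsup (fun m => (n : ℝ) * BDF A m) atTop := hmul
        _ ≤ Filter.limsup (fun m => BDF B m + ε) atTop :=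
            limsup_le_limsup hev hnAc hBεb
        _ = Filter.limsup (BDF B) atTop + ε := limsup_add_const atTop (BDF B) ε hBb hBc
end

section
/- If A ⊆ ℕ has upper Banach density BD(A) = α > 0 and X ⊆ ℕ is a finite set with |X| > 1/α, then Δ(A) ∩ Δ(X) ≠ ∅, where Δ(S) denotes the set of positive differences of elements of S. -/
open Classical in
lemma banach_aux (A : Set ℕ) (m : ℕ) :
    (fun m : ℕ => ⨆ x : ℕ, (((Finset.Icc (x + 1) (x + m)).filter (· ∈ A)).card : ℝ) / m) m ≤ 1 ∧
    0 ≤ (fun m : ℕ => ⨆ x : ℕ, (((Finset.Icc (x + 1) (x + m)).filter (· ∈ A)).card : ℝ) / m) m := by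
  have hterm : ∀ x : ℕ, (((Finset.Icc (x + 1) (x + m)).filter (· ∈ A)).card : ℝ) / m ≤ 1 := by
    intro x
    rcases Nat.eq_zero_or_pos m with hm | hm
    · simp [hm]
    · rw [div_le_one (by positivity)]
      have := Finset.card_filter_le (Finset.Icc (x + 1) (x + m)) (· ∈ A)
      have hI : (Finset.Icc (x + 1) (x + m)).card = m := by
        rw [Nat.card_Icc]; omega
      exact_mod_cast (hI ▸ this)
  constructor
  · exact ciSup_le hterm
  · refine le_trans (by positivity) (le_ciSup ⟨1, ?_⟩ 0)
    rintro y ⟨x, rfl⟩; exact hterm x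

/-- If `BD(A) = α > 0` and `X` is a finite set with more than `1/α` elements,
then `Δ(A) ∩ Δ(X) ≠ ∅`. -/
theorem deltaSet_intersect_of_banachDensity_pos (A : Set ℕ) (α : ℝ)
    (hα : BanachDensity A = α) (hpos : 0 < α)
    (X : Finset ℕ) (hX : (X.card : ℝ) > 1 / α) :
    (DeltaSet A ∩ DeltaSet (X : Set ℕ)).Nonempty := by
  classical
  by_contra hcon
  rw [Set.not_nonempty_iff_eq_empty] at hcon
  set f : ℕ → ℝ := fun m : ℕ =>
    ⨆ x : ℕ, (((Finset.Icc (x + 1) (x + m)).filter (· ∈ A)).card : ℝ) / m with hf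
  have hαf : Filter.limsup f Filter.atTop = α := hα
  set K : ℝ := (X.card : ℝ) with hK
  have hK0 : 0 < K := lt_trans (by positivity) hX
  have hKα : 1 < K * α := (div_lt_iff₀ hpos).mp hX
  set δ : ℝ := K * α - 1 with hδ
  have hδ0 : 0 < δ := by simp [hδ]; linarith
  set ε : ℝ := δ / (2 * K) with hε
  have hε0 : 0 < ε := by positivity
  set M : ℕ := X.sup id with hM
  obtain ⟨m0, hm0⟩ := exists_nat_gt (2 * (M : ℝ) / δ)
  -- frequently f m > α - ε
  have hcb : Filter.IsCoboundedUnder (· ≤ ·) Filter.atTop f :=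
    Filter.IsBoundedUnder.isCoboundedUnder_le
      (Filter.isBoundedUnder_of ⟨0, fun m => (banach_aux A m).2⟩)
  have hfreq : ∃ᶠ m in Filter.atTop, α - ε < f m := by
    apply Filter.frequently_lt_of_lt_limsup hcb
    rw [hαf]; linarith
  obtain ⟨m, hmf, hmge⟩ :=
    (hfreq.and_eventually (Filter.eventually_ge_atTop (m0 + 1))).exists
  have hmpos : 0 < m := by omega
  have hmR : (0 : ℝ) < m := by exact_mod_cast hmpos
  obtain ⟨x, hx⟩ := exists_lt_of_lt_ciSup hmf
  set B : Finset ℕ := (Finset.Icc (x + 1) (x + m)).filter (· ∈ A) with hB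
  have hcount : (α - ε) * m < (B.card : ℝ) := by
    rw [← lt_div_iff₀ hmR] at *
    exact hx
  -- injectivity / counting
  have hinj : Set.InjOn (fun p : ℕ × ℕ => p.2 + p.1) ↑(X ×ˢ B) := by
    rintro ⟨i, b⟩ hp ⟨j, b'⟩ hq heq
    have heq' : b + i = b' + j := heq
    clear heq
    simp only [Finset.coe_product, Set.mem_prod, Finset.mem_coe, Finset.mem_product] at hp hq
    obtain ⟨hiX, hbB⟩ := hp
    obtain ⟨hjX, hbB'⟩ := hq
    have hbA : b ∈ A := (Finset.mem_filter.mp hbB).2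
    have hbA' : b' ∈ A := (Finset.mem_filter.mp hbB').2
    rcases lt_trichotomy i j with hij | hij | hij
    · exfalso
      have hd : (j - i) ∈ DeltaSet A ∩ DeltaSet (X : Set ℕ) := by
        constructor
        · exact ⟨b', hbA', b, hbA, by omega, by omega⟩
        · exact ⟨i, hiX, j, hjX, hij, rfl⟩
      rw [hcon] at hd; exact hd
    · have hb' : b = b' := by omega
      rw [hij, hb']
    · exfalso
      have hd : (i - j) ∈ DeltaSet A ∩ DeltaSet (X : Set ℕ) := by
        constructor
        · exact ⟨b, hbA, b', hbA', by omega, by omega⟩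
        · exact ⟨j, hjX, i, hiX, hij, rfl⟩
      rw [hcon] at hd; exact hd
  have hmaps : ∀ p ∈ X ×ˢ B, (fun p : ℕ × ℕ => p.2 + p.1) p ∈ Finset.Icc (x + 1) (x + m + M) := by
    rintro ⟨i, b⟩ hp
    rw [Finset.mem_product] at hp
    have hiM : i ≤ M := Finset.le_sup (f := id) hp.1
    have hb := (Finset.mem_filter.mp hp.2).1
    rw [Finset.mem_Icc] at hb
    rw [Finset.mem_Icc]
    show x + 1 ≤ b + i ∧ b + i ≤ x + m + M
    omega
  have hcard : X.card * B.card ≤ m + M := by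
    have := Finset.card_le_card_of_injOn _ hmaps hinj
    rwa [Finset.card_product, Nat.card_Icc, show x + m + M + 1 - (x + 1) = m + M by omega] at this
  have hcardR : K * (B.card : ℝ) ≤ (m : ℝ) + M := by
    have : ((X.card * B.card : ℕ) : ℝ) ≤ ((m + M : ℕ) : ℝ) := by exact_mod_cast hcard
    push_cast at this; linarith
  -- final contradiction
  have hKε : K * ε = δ / 2 := by
    rw [hε]; field_simp
  have h1 : K * ((α - ε) * m) < (m : ℝ) + M := lt_of_lt_of_le (by nlinarith) hcardR
  have h2 : (1 + δ / 2) * m < (m : ℝ) + M := by nlinarith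
  have hm0m : (2 * (M : ℝ) / δ) < m := by
    have : (m0 : ℝ) ≤ m := by exact_mod_cast Nat.le_of_succ_le hmge
    linarith
  rw [div_lt_iff₀ hδ0] at hm0m
  nlinarith
end

section
/- Universal property of piecewise syndetic sets: if F ⊆ P(ℕ) is a partition regular family consisting only of finite sets, then every multiplicatively piecewise syndetic set A ⊆ ℕ contains a multiplicative shift m·F of some element F ∈ F (i.e., there exist F ∈ F and m ∈ ℕ with {m·f : f ∈ F} ⊆ A). -/
/-!
Write `A = S ∩ T` and let every `x > 0` have a multiple `x * (j x + 1) ∈ S` with `j x < k`.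
By compactness, all `k`-colourings of `ℕ` already have a monochromatic member of `𝓕` inside
one finite set `N`. Thickness of `T` gives `x > 0` with `x * n ∈ T` for every positive
`n ∈ N * {0, …, k}`. Colouring `n` by `j (x * n)` yields a monochromatic `F ⊆ N` of some
colour `c`, and `m = x * (c + 1)` works.
-/

def MulThick (T : Set ℕ) : Prop :=
  ∀ F : Finset ℕ, (∀ f ∈ F, 0 < f) → ∃ x : ℕ, 0 < x ∧ ∀ f ∈ F, x * f ∈ T

def MulSyndetic (A : Set ℕ) : Prop :=
  ∃ k : ℕ, 0 < k ∧ ∀ x : ℕ, 0 < x → ∃ i : ℕ, 1 ≤ i ∧ i ≤ k ∧ x * i ∈ A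

def MulPiecewiseSyndetic (A : Set ℕ) : Prop :=
  ∃ S T : Set ℕ, MulSyndetic S ∧ MulThick T ∧ A = S ∩ T

/-- A family of subsets of `ℕ` is partition regular if every finite coloring of `ℕ`
admits a monochromatic member of the family. -/
def PartitionRegularFamily (𝓕 : Set (Set ℕ)) : Prop :=
  ∀ r : ℕ, ∀ C : ℕ → Fin r, ∃ F ∈ 𝓕, ∃ c : Fin r, ∀ n ∈ F, C n = c

open Pointwise

theorem exists_finset_forall_coloring_exists_mono {α κ : Type*} [Finite κ] {𝓕 : Set (Set α)}
    (hfin : ∀ F ∈ 𝓕, F.Finite) (h𝓕 : ∀ C : α → κ, ∃ F ∈ 𝓕, ∃ c, ∀ n ∈ F, C n = c) :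
    ∃ N : Finset α, ∀ C : α → κ, ∃ F ∈ 𝓕, F ⊆ N ∧ ∃ c, ∀ n ∈ F, C n = c := by
  classical
  -- The colourings `α → κ` form a compact space, covered by the open sets `U (F, c)`.
  let _ : TopologicalSpace κ := ⊥
  have _ : DiscreteTopology κ := ⟨rfl⟩
  let U : 𝓕 × κ → Set (α → κ) := fun i => ⋂ n ∈ (i.1 : Set α), (fun C => C n) ⁻¹' {i.2}
  have hU : ∀ i, IsOpen (U i) := fun i =>
    (hfin _ i.1.2).isOpen_biInter fun n _ => (isOpen_discrete _).preimage (continuous_apply n)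
  obtain ⟨t, ht⟩ := isCompact_univ.elim_finite_subcover U hU fun C _ => by
    obtain ⟨F, hF, c, hc⟩ := h𝓕 C
    exact Set.mem_iUnion.2 ⟨(⟨F, hF⟩, c), Set.mem_iInter₂.2 hc⟩
  refine ⟨t.biUnion fun i => (hfin _ i.1.2).toFinset, fun C => ?_⟩
  obtain ⟨i, hi, hC⟩ := Set.mem_iUnion₂.1 (ht (Set.mem_univ C))
  refine ⟨i.1, i.1.2, fun n hn => ?_, i.2, fun n hn => Set.mem_iInter₂.1 hC n hn⟩
  simpa using ⟨i.1, ⟨i.1.2, i.2, hi⟩, hn⟩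

theorem MulSyndetic.exists_fin_multiplier {S : Set ℕ} (hS : MulSyndetic S) :
    ∃ k, ∃ j : ℕ → Fin k, ∀ x, 0 < x → x * ((j x : ℕ) + 1) ∈ S := by
  obtain ⟨k, hk, hS⟩ := hS
  have : NeZero k := ⟨hk.ne'⟩
  have : ∀ x, 0 < x → ∃ j : Fin k, x * ((j : ℕ) + 1) ∈ S := fun x hx => by
    obtain ⟨i, hi1, hik, hiS⟩ := hS x hx
    exact ⟨⟨i - 1, by omega⟩, by rwa [Nat.sub_add_cancel hi1]⟩
  choose! j hj using this
  exact ⟨k, j, hj⟩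

/-- Universal property of multiplicatively piecewise syndetic sets: if `𝓕` is a
partition regular family of finite sets of positive integers, then every
multiplicatively piecewise syndetic set includes a multiplicative shift of a member of `𝓕`. -/
theorem mulPiecewiseSyndetic_contains_shift_of_partition_regular
    (𝓕 : Set (Set ℕ))
    (hfin : ∀ F ∈ 𝓕, F.Finite)
    (hpos : ∀ F ∈ 𝓕, ∀ n ∈ F, 0 < n)
    (hPR : PartitionRegularFamily 𝓕)
    (A : Set ℕ) (hA : MulPiecewiseSyndetic A) :
    ∃ F ∈ 𝓕, ∃ m : ℕ, 0 < m ∧ ∀ f ∈ F, m * f ∈ A := by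
  obtain ⟨S, T, hS, hT, rfl⟩ := hA
  obtain ⟨k, j, hj⟩ := hS.exists_fin_multiplier
  obtain ⟨N, hN⟩ := exists_finset_forall_coloring_exists_mono hfin (hPR k)
  obtain ⟨x, hx, hxT⟩ := hT ((N * Finset.range (k + 1)).filter (0 < ·)) (by simp)
  obtain ⟨F, hF, hFN, c, hc⟩ := hN fun n => j (x * n)
  refine ⟨F, hF, x * (c + 1), by positivity, fun f hf => ⟨?_, ?_⟩⟩
  · have hfS := hj (x * f) (Nat.mul_pos hx (hpos F hF f hf))
    rw [hc f hf] at hfS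
    convert hfS using 1
    ring
  · have hfc : f * (c + 1) ∈ (N * Finset.range (k + 1)).filter (0 < ·) :=
      Finset.mem_filter.2
        ⟨Finset.mul_mem_mul (hFN hf) (by simp), Nat.mul_pos (hpos F hF f hf) (by omega)⟩
    convert hxT _ hfc using 1
    ring
end

section
/- For a homogeneous polynomial P ∈ ℤ[x₁,…,x_k], the equation P(x₁,…,x_k) = 0 is partition regular on ℕ if and only if every multiplicatively piecewise syndetic set A ⊆ ℕ contains elements a₁,…,a_k ∈ A with P(a₁,…,a_k) = 0. -/
/-- The equation `P(x₁,…,x_k) = 0` is partition regular on the positive integers: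
every finite coloring admits a monochromatic solution. -/
def EqPartitionRegular {k : ℕ} (P : MvPolynomial (Fin k) ℤ) : Prop :=
  ∀ r : ℕ, ∀ C : ℕ → Fin r, ∃ a : Fin k → ℕ, (∀ i, 0 < a i) ∧
    (∃ c : Fin r, ∀ i, C (a i) = c) ∧
    MvPolynomial.eval (fun i => (a i : ℤ)) P = 0

/-!
A set `B` is multiplicatively piecewise syndetic exactly when some finite union
`B/1 ∪ ⋯ ∪ B/m` of its quotients `B/i = {x | x * i ∈ B}` is multiplicatively thick.

If `P = 0` is partition regular, compactness gives `N` such that every `(m+1)`-colouring of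
`[1, N]` has a monochromatic solution. For piecewise syndetic `A`, pick `x` with
`x * [1, N] ⊆ B/1 ∪ ⋯ ∪ B/m`, colour `n ≤ N` by some `i ≤ m` with `x * n * i ∈ A`, and scale a
monochromatic solution of colour `i` by `x * i`: by homogeneity it remains a solution.

Conversely, piecewise syndeticity is partition regular: if `A` is not thick, some finite `F`
has no dilate inside `A`, so every dilate of `F` inside a thick set `T ⊆ A ∪ B` meets `B`,
which makes `B/1 ∪ ⋯ ∪ B/max F` thick. Hence some colour class of any finite colouring is
piecewise syndetic and contains a solution.
-/

open MvPolynomial Filter Pointwise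

theorem MvPolynomial.IsHomogeneous.eval_smul {σ R : Type*} [CommSemiring R]
    {φ : MvPolynomial σ R} {n : ℕ} (hφ : φ.IsHomogeneous n) (c : R) (x : σ → R) :
    eval (c • x) φ = c ^ n * eval x φ := by
  rw [eval_eq, eval_eq, Finset.mul_sum]
  refine Finset.sum_congr rfl fun d hd => ?_
  have hdeg : ∑ i ∈ d.support, d i = n := by
    rw [← hφ (mem_support_iff.mp hd), Finsupp.weight_apply, Finsupp.sum]
    simp
  simp only [Pi.smul_apply, smul_eq_mul, mul_pow, Finset.prod_mul_distrib,
    Finset.prod_pow_eq_pow_sum, hdeg]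
  ring

namespace MulThick

theorem mono {T T' : Set ℕ} (hT : MulThick T) (h : T ⊆ T') : MulThick T' := fun F hF =>
  (hT F hF).imp fun _ hx => ⟨hx.1, fun f hf => h (hx.2 f hf)⟩

theorem exists_mul_mul_mem {T : Set ℕ} (hT : MulThick T) {F G : Finset ℕ}
    (hF : ∀ f ∈ F, 0 < f) (hG : ∀ g ∈ G, 0 < g) :
    ∃ x, 0 < x ∧ ∀ f ∈ F, ∀ g ∈ G, x * f * g ∈ T := by
  obtain ⟨x, hx, hxT⟩ := hT (F * G) <| Finset.forall_mem_image₂.2 fun f hf g hg =>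
    Nat.mul_pos (hF f hf) (hG g hg)
  exact ⟨x, hx, fun f hf g hg => mul_assoc x f g ▸ hxT _ (Finset.mul_mem_mul hf hg)⟩

end MulThick

def divUnion (B : Set ℕ) (m : ℕ) : Set ℕ := {x | ∃ i, 1 ≤ i ∧ i ≤ m ∧ x * i ∈ B}

theorem mulPiecewiseSyndetic_iff_exists_mulThick_divUnion {B : Set ℕ} :
    MulPiecewiseSyndetic B ↔ ∃ m, MulThick (divUnion B m) := by
  constructor
  · rintro ⟨S, T, ⟨m, -, hS⟩, hT, rfl⟩
    refine ⟨m, fun F hF => ?_⟩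
    obtain ⟨x, hx, hxT⟩ := hT.exists_mul_mul_mem hF (G := Finset.Icc 1 m)
      fun i hi => (Finset.mem_Icc.1 hi).1
    refine ⟨x, hx, fun f hf => ?_⟩
    obtain ⟨i, hi1, him, hiS⟩ := hS (x * f) (Nat.mul_pos hx (hF f hf))
    exact ⟨i, hi1, him, hiS, hxT f hf i (Finset.mem_Icc.2 ⟨hi1, him⟩)⟩
  · rintro ⟨m, hU⟩
    have hm : 0 < m := by
      obtain ⟨x, -, hx⟩ := hU {1} (by simp)
      obtain ⟨i, hi1, him, -⟩ := hx 1 (Finset.mem_singleton_self 1)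
      omega
    refine ⟨B ∪ (divUnion B m)ᶜ, divUnion B m ∪ B, ⟨m, hm, fun x _ => ?_⟩,
      hU.mono Set.subset_union_left, ?_⟩
    · by_cases hx : x ∈ divUnion B m
      · obtain ⟨i, hi1, him, hiB⟩ := hx
        exact ⟨i, hi1, him, Or.inl hiB⟩
      · exact ⟨1, le_rfl, hm, Or.inr (by rwa [mul_one])⟩
    · ext y
      simp only [Set.mem_inter_iff, Set.mem_union, Set.mem_compl_iff]
      tauto

theorem MulThick.mulThick_or_mulPiecewiseSyndetic {T A B : Set ℕ} (hT : MulThick T)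
    (h : T ⊆ A ∪ B) : MulThick A ∨ MulPiecewiseSyndetic B := by
  refine or_iff_not_imp_left.2 fun hA => ?_
  obtain ⟨F, hF, hFA⟩ : ∃ F : Finset ℕ, (∀ f ∈ F, 0 < f) ∧ ∀ x, 0 < x → ∃ f ∈ F, x * f ∉ A := by
    simpa [MulThick] using hA
  refine mulPiecewiseSyndetic_iff_exists_mulThick_divUnion.2 ⟨F.sup id, fun G hG => ?_⟩
  obtain ⟨x, hx, hxT⟩ := hT.exists_mul_mul_mem hG hF
  refine ⟨x, hx, fun g hg => ?_⟩
  obtain ⟨f, hf, hfA⟩ := hFA (x * g) (Nat.mul_pos hx (hG g hg))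
  exact ⟨f, hF f hf, Finset.le_sup (f := id) hf, (h (hxT g hg f hf)).resolve_left hfA⟩

theorem MulThick.exists_mulPiecewiseSyndetic_of_subset_biUnion {ι : Type*} {T : Set ℕ}
    (hT : MulThick T) (s : Finset ι) (A : ι → Set ℕ) (h : T ⊆ ⋃ i ∈ s, A i) :
    ∃ i ∈ s, MulPiecewiseSyndetic (A i) := by
  classical
  induction s using Finset.induction_on generalizing T with
  | empty =>
    obtain ⟨x, -, hx⟩ := hT {1} (by simp)
    simpa using h (hx 1 (Finset.mem_singleton_self 1))
  | insert j s _ ih =>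
    rw [Finset.set_biUnion_insert, Set.union_comm] at h
    rcases hT.mulThick_or_mulPiecewiseSyndetic h with hs | hj
    · obtain ⟨i, hi, hA⟩ := ih hs subset_rfl
      exact ⟨i, Finset.mem_insert_of_mem hi, hA⟩
    · exact ⟨j, Finset.mem_insert_self j s, hj⟩

theorem exists_mulPiecewiseSyndetic_preimage_singleton {ι : Type*} [Fintype ι] (C : ℕ → ι) :
    ∃ c, MulPiecewiseSyndetic (C ⁻¹' {c}) := by
  have huniv : MulThick Set.univ := fun _ _ => ⟨1, one_pos, fun _ _ => trivial⟩
  simpa using huniv.exists_mulPiecewiseSyndetic_of_subset_biUnion Finset.univ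
    (fun c => C ⁻¹' {c}) fun n _ => by simp

theorem EqPartitionRegular.exists_bound {k : ℕ} {P : MvPolynomial (Fin k) ℤ}
    (hP : EqPartitionRegular P) (r : ℕ) :
    ∃ N, ∀ C : ℕ → Fin r, ∃ a : Fin k → ℕ, (∀ i, 0 < a i ∧ a i ≤ N) ∧
      (∃ c, ∀ i, C (a i) = c) ∧ eval (fun i => (a i : ℤ)) P = 0 := by
  by_contra! hbad
  choose χ hχ using hbad
  -- a limit of the colourings `χ N` along an ultrafilter has no monochromatic solution at all
  let U : Ultrafilter ℕ := Ultrafilter.of atTop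
  have hlim (n : ℕ) : ∃ c, ∀ᶠ N in U, χ N n = c :=
    Ultrafilter.eventually_exists_iff.1 (Eventually.of_forall fun N => ⟨_, rfl⟩)
  choose L hL using hlim
  obtain ⟨a, ha, ⟨c, hc⟩, hPa⟩ := hP r L
  have hbig : ∀ᶠ N in U, ∀ i, a i ≤ N :=
    Ultrafilter.of_le atTop (eventually_all.2 fun i => eventually_ge_atTop (a i))
  obtain ⟨N, hNa, hN⟩ := (hbig.and (eventually_all.2 fun i => hL (a i))).exists
  exact hχ N a (fun i => ⟨ha i, hNa i⟩) ⟨c, fun i => (hN i).trans (hc i)⟩ hPa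

theorem EqPartitionRegular.exists_solution_of_mulPiecewiseSyndetic {k ℓ : ℕ}
    {P : MvPolynomial (Fin k) ℤ} (hhom : P.IsHomogeneous ℓ) (hP : EqPartitionRegular P)
    {A : Set ℕ} (hA : MulPiecewiseSyndetic A) :
    ∃ a : Fin k → ℕ, (∀ i, 0 < a i ∧ a i ∈ A) ∧ eval (fun i => (a i : ℤ)) P = 0 := by
  obtain ⟨m, hU⟩ := mulPiecewiseSyndetic_iff_exists_mulThick_divUnion.1 hA
  obtain ⟨N, hN⟩ := hP.exists_bound (m + 1)
  obtain ⟨x, hx, hxU⟩ := hU (Finset.Icc 1 N) fun n hn => (Finset.mem_Icc.1 hn).1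
  have hcolour (n : ℕ) :
      ∃ i : Fin (m + 1), x * n ∈ divUnion A m → 1 ≤ (i : ℕ) ∧ x * n * i ∈ A := by
    by_cases hn : x * n ∈ divUnion A m
    · obtain ⟨i, hi1, him, hiA⟩ := hn
      exact ⟨⟨i, by omega⟩, fun _ => ⟨hi1, hiA⟩⟩
    · exact ⟨0, fun h => absurd h hn⟩
  choose χ hχ using hcolour
  obtain ⟨a, ha, ⟨i, hi⟩, hPa⟩ := hN χ
  refine ⟨fun j => x * i * a j, fun j => ?_, ?_⟩
  · obtain ⟨hi1, hiA⟩ := hi j ▸ hχ (a j) (hxU _ (Finset.mem_Icc.2 (ha j)))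
    exact ⟨Nat.mul_pos (Nat.mul_pos hx hi1) (ha j).1, by simpa only [mul_right_comm] using hiA⟩
  · simpa [Pi.smul_def, hPa] using hhom.eval_smul ((x * i : ℕ) : ℤ) fun j => (a j : ℤ)

/-- For a homogeneous polynomial `P`, partition regularity of `P = 0` on `ℕ` is
equivalent to every multiplicatively piecewise syndetic set containing a solution. -/
theorem eqPartitionRegular_iff_solutions_in_mulPS
    {k ℓ : ℕ} (P : MvPolynomial (Fin k) ℤ) (hhom : P.IsHomogeneous ℓ) :
    EqPartitionRegular P ↔
      ∀ A : Set ℕ, MulPiecewiseSyndetic A →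
        ∃ a : Fin k → ℕ, (∀ i, 0 < a i ∧ a i ∈ A) ∧
          MvPolynomial.eval (fun i => (a i : ℤ)) P = 0 := by
  refine ⟨fun hP A hA => hP.exists_solution_of_mulPiecewiseSyndetic hhom hA, fun h r C => ?_⟩
  obtain ⟨c, hc⟩ := exists_mulPiecewiseSyndetic_preimage_singleton C
  obtain ⟨a, ha, hPa⟩ := h _ hc
  exact ⟨a, fun i => (ha i).1, ⟨c, fun i => (ha i).2⟩, hPa⟩
end

section
/- If each of the homogeneous polynomials P₁,…,P_N (with Pᵢ having kᵢ variables) is partition regular on ℕ, then in every multiplicatively piecewise syndetic set A ⊆ ℕ there exist a common element b ∈ A and elements a_{i,2},…,a_{i,kᵢ} ∈ A such that Pᵢ(b, a_{i,2},…,a_{i,kᵢ}) = 0 for every i = 1,…,N. -/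
namespace JointPS

open Filter

/-- Scaling evaluation of a homogeneous polynomial. -/
lemma eval_scale {k ℓ : ℕ} {P : MvPolynomial (Fin k) ℤ} (h : P.IsHomogeneous ℓ)
    (c : ℤ) (x : Fin k → ℤ) :
    MvPolynomial.eval (fun i => c * x i) P = c ^ ℓ * MvPolynomial.eval x P := by
  rw [MvPolynomial.eval_eq, MvPolynomial.eval_eq, Finset.mul_sum]
  refine Finset.sum_congr rfl fun d hd => ?_
  have hdeg : ∑ i ∈ d.support, d i = ℓ := by
    have := h (MvPolynomial.mem_support_iff.mp hd)
    rw [← this, ← Finsupp.degree_apply, Finsupp.degree_eq_weight_one]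
    rfl
  calc MvPolynomial.coeff d P * ∏ i ∈ d.support, (c * x i) ^ d i
      = MvPolynomial.coeff d P *
        ((∏ i ∈ d.support, c ^ d i) * ∏ i ∈ d.support, x i ^ d i) := by
        rw [← Finset.prod_mul_distrib]
        simp_rw [mul_pow]
    _ = c ^ ℓ * (MvPolynomial.coeff d P * ∏ i ∈ d.support, x i ^ d i) := by
        rw [Finset.prod_pow_eq_pow_sum, hdeg]; ring

/-- The set of positive naturals. -/
def Pos : Set ℕ := {n | 0 < n}

/-- `B` contains a solution of `P = 0` with positive entries. -/
def Sol {k : ℕ} (P : MvPolynomial (Fin k) ℤ) (B : Set ℕ) : Prop :=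
  ∃ a : Fin k → ℕ, (∀ j, 0 < a j ∧ a j ∈ B) ∧
    MvPolynomial.eval (fun j => (a j : ℤ)) P = 0

/-- `q` is a solution-rich ultrafilter for `P`. -/
def Rich {k : ℕ} (P : MvPolynomial (Fin k) ℤ) (q : Ultrafilter ℕ) : Prop :=
  ∀ B ∈ q, Sol P B

lemma Rich.pos_mem {k : ℕ} (hk : 0 < k) {P : MvPolynomial (Fin k) ℤ}
    {q : Ultrafilter ℕ} (hq : Rich P q) : Pos ∈ q := by
  by_contra h
  obtain ⟨a, ha, -⟩ := hq Posᶜ (Ultrafilter.compl_mem_iff_notMem.mpr h)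
  exact (ha ⟨0, hk⟩).2 (ha ⟨0, hk⟩).1

/-- Product of ultrafilters on `(ℕ, *)`. -/
def umul (q w : Ultrafilter ℕ) : Ultrafilter ℕ :=
  q.bind fun n => w.map (fun m => n * m)

lemma mem_umul {q w : Ultrafilter ℕ} {B : Set ℕ} :
    B ∈ umul q w ↔ {n | {m | n * m ∈ B} ∈ w} ∈ q := Iff.rfl

lemma pos_mem_umul {q w : Ultrafilter ℕ} (hq : Pos ∈ q) (hw : Pos ∈ w) :
    Pos ∈ umul q w := by
  rw [mem_umul]
  filter_upwards [hq] with n hn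
  filter_upwards [hw] with m hm
  exact Nat.mul_pos hn hm

lemma Rich.umul_right {k ℓ : ℕ} {P : MvPolynomial (Fin k) ℤ}
    (hhom : P.IsHomogeneous ℓ) {q w : Ultrafilter ℕ}
    (hq : Rich P q) (hw : Pos ∈ w) : Rich P (umul q w) := by
  intro B hB
  rw [mem_umul] at hB
  obtain ⟨a, ha, heval⟩ := hq _ hB
  have hmem : (Pos ∩ ⋂ j : Fin k, {m | a j * m ∈ B}) ∈ w := by
    exact inter_mem hw (iInter_mem.mpr fun j => (ha j).2)
  obtain ⟨m, hmpos, hm⟩ := Ultrafilter.nonempty_of_mem hmem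
  rw [Set.mem_iInter] at hm
  refine ⟨fun j => a j * m, fun j => ⟨Nat.mul_pos (ha j).1 hmpos, hm j⟩, ?_⟩
  have : (fun j => ((a j * m : ℕ) : ℤ)) = fun j => (m : ℤ) * ((a j : ℕ) : ℤ) := by
    funext j; push_cast; ring
  rw [this, eval_scale hhom, heval, mul_zero]

lemma Rich.umul_left {k ℓ : ℕ} {P : MvPolynomial (Fin k) ℤ}
    (hhom : P.IsHomogeneous ℓ) {q w : Ultrafilter ℕ}
    (hq : Pos ∈ q) (hw : Rich P w) : Rich P (umul q w) := by
  intro B hB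
  rw [mem_umul] at hB
  obtain ⟨n, hnpos, hn⟩ := Ultrafilter.nonempty_of_mem (inter_mem hq hB)
  obtain ⟨a, ha, heval⟩ := hw _ hn
  refine ⟨fun j => n * a j, fun j => ⟨Nat.mul_pos hnpos (ha j).1, (ha j).2⟩, ?_⟩
  have : (fun j => ((n * a j : ℕ) : ℤ)) = fun j => (n : ℤ) * ((a j : ℕ) : ℤ) := by
    funext j; push_cast; ring
  rw [this, eval_scale hhom, heval, mul_zero]

/-- Partition regularity yields a solution-rich ultrafilter. -/
lemma exists_rich {k : ℕ} {P : MvPolynomial (Fin k) ℤ}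
    (hPR : EqPartitionRegular P) : ∃ q : Ultrafilter ℕ, Rich P q := by
  classical
  set base : Set (Set ℕ) := {s | ∃ B : Set ℕ, ¬ Sol P B ∧ s = Bᶜ} with hbase
  have hNeBot : (Filter.generate base).NeBot := by
    rw [Filter.generate_neBot_iff]
    intro t hts htfin
    by_contra hempty
    rw [Set.not_nonempty_iff_eq_empty] at hempty
    -- enumerate t by a list
    set L : List (Set ℕ) := htfin.toFinset.toList with hL
    have hmemL : ∀ s, s ∈ L ↔ s ∈ t := by
      intro s
      rw [hL, Finset.mem_toList, Set.Finite.mem_toFinset]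
    have hcover : ∀ n : ℕ, ∃ j : Fin L.length, n ∉ L.get j := by
      intro n
      have : n ∉ ⋂₀ t := by rw [hempty]; exact Set.notMem_empty n
      rw [Set.mem_sInter] at this
      push_neg at this
      obtain ⟨s, hst, hns⟩ := this
      obtain ⟨j, hj⟩ := List.get_of_mem ((hmemL s).mpr hst)
      exact ⟨j, by rw [hj]; exact hns⟩
    have hr : 0 < L.length := by
      rcases Nat.eq_zero_or_pos L.length with h0 | h
      · exfalso
        have hLnil : L = [] := List.length_eq_zero_iff.mp h0
        have : t = ∅ := by
          ext s
          simp only [Set.mem_empty_iff_false, iff_false]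
          intro hs
          have := (hmemL s).mpr hs
          rw [hLnil] at this
          exact (List.not_mem_nil this)
        rw [this, Set.sInter_empty] at hempty
        exact Set.univ_nonempty.ne_empty hempty
      · exact h
    -- define a coloring
    obtain ⟨a, hapos, ⟨c, hc⟩, heval⟩ := hPR L.length (fun n => (hcover n).choose)
    have hnotin : ∀ i, a i ∉ L.get c := by
      intro i
      have h2 := (hcover (a i)).choose_spec
      rwa [hc i] at h2
    have hLt : L.get c ∈ t := (hmemL _).mp (L.get_mem c)
    obtain ⟨B, hBnoSol, hBc⟩ := hts hLt
    apply hBnoSol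
    refine ⟨a, fun j => ⟨hapos j, ?_⟩, heval⟩
    have := hnotin j
    rw [hBc] at this
    simpa using this
  refine ⟨@Ultrafilter.of _ (Filter.generate base) hNeBot, ?_⟩
  intro B hB
  by_contra hno
  have hBc : Bᶜ ∈ Filter.generate base :=
    Filter.mem_generate_iff.mpr ⟨{Bᶜ}, by
      intro s hs
      rcases hs with rfl
      exact ⟨B, hno, rfl⟩, Set.finite_singleton _, by simp⟩
  have hle := @Ultrafilter.of_le _ (Filter.generate base) hNeBot
  have : Bᶜ ∈ @Ultrafilter.of _ (Filter.generate base) hNeBot := hle hBc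
  exact (Ultrafilter.compl_mem_iff_notMem.mp this) hB

end JointPS

open Filter JointPS in
/-- Joint solvability in multiplicatively piecewise syndetic sets: partition regular
homogeneous equations can be solved in any multiplicatively piecewise syndetic set `A`
with a common first entry `b ∈ A`. -/
theorem joint_solutions_in_mulPS
    (N : ℕ) (k : Fin N → ℕ) (hk : ∀ i, 0 < k i)
    (P : (i : Fin N) → MvPolynomial (Fin (k i)) ℤ)
    (ℓ : Fin N → ℕ) (hhom : ∀ i, (P i).IsHomogeneous (ℓ i))
    (hPR : ∀ i, EqPartitionRegular (P i))
    (A : Set ℕ) (hA : MulPiecewiseSyndetic A) :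
    ∃ b : ℕ, 0 < b ∧ b ∈ A ∧
      ∀ i : Fin N, ∃ a : Fin (k i) → ℕ,
        (∀ j, 0 < a j ∧ a j ∈ A) ∧ a ⟨0, hk i⟩ = b ∧
        MvPolynomial.eval (fun j => (a j : ℤ)) (P i) = 0 := by
  classical
  obtain ⟨S, T, ⟨Kc, hKc, hSynd⟩, hT, rfl⟩ := hA
  -- rich ultrafilters for each equation
  have hq : ∀ i : Fin N, ∃ q : Ultrafilter ℕ, Rich (P i) q := fun i => exists_rich (hPR i)
  choose q hqRich using hq
  have hqPos : ∀ i, Pos ∈ q i := fun i => (hqRich i).pos_mem (hk i)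
  -- fold into a single ultrafilter rich for all equations
  let fold : List (Fin N) → Ultrafilter ℕ :=
    fun L => L.foldr (fun i acc => umul (q i) acc) (pure 1)
  have hfoldPos : ∀ L : List (Fin N), Pos ∈ fold L := by
    intro L
    induction L with
    | nil => exact Ultrafilter.mem_pure.mpr Nat.one_pos
    | cons hd tl ih => exact pos_mem_umul (hqPos hd) ih
  have hfoldRich : ∀ (L : List (Fin N)) (i : Fin N), i ∈ L → Rich (P i) (fold L) := by
    intro L
    induction L with
    | nil => intro i hi; exact absurd hi List.not_mem_nil
    | cons hd tl ih =>
      intro i hi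
      rcases List.mem_cons.mp hi with rfl | hi'
      · exact Rich.umul_right (hhom i) (hqRich i) (hfoldPos tl)
      · exact Rich.umul_left (hhom i) (hqPos hd) (ih i hi')
  set Qstar : Ultrafilter ℕ := fold (List.finRange N) with hQstar
  have hQPos : Pos ∈ Qstar := hfoldPos _
  have hQRich : ∀ i, Rich (P i) Qstar := fun i => hfoldRich _ i (List.mem_finRange i)
  -- the thickness ultrafilter
  let D : Finset ℕ → Set ℕ := fun F => {x | 0 < x ∧ ∀ f ∈ F, 0 < f → x * f ∈ T}
  have hDne : ∀ F, (D F).Nonempty := by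
    intro F
    obtain ⟨x, hx, hxF⟩ := hT (F.filter (fun f => 0 < f)) (by
      intro f hf; exact (Finset.mem_filter.mp hf).2)
    exact ⟨x, hx, fun f hf hfpos => hxF f (Finset.mem_filter.mpr ⟨hf, hfpos⟩)⟩
  have hNeBot : (⨅ F : Finset ℕ, 𝓟 (D F)).NeBot := by
    apply Filter.iInf_neBot_of_directed
    · intro F G
      refine ⟨F ∪ G, ?_, ?_⟩ <;>
        · apply Filter.principal_mono.mpr
          intro x hx
          refine ⟨hx.1, fun f hf hfp => hx.2 f ?_ hfp⟩
          simp [Finset.mem_union, hf]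
    · intro F
      exact Filter.principal_neBot_iff.mpr (hDne F)
  set v : Ultrafilter ℕ := @Ultrafilter.of _ _ hNeBot with hv
  have hvD : ∀ F, D F ∈ v := by
    intro F
    have h1 : (⨅ F : Finset ℕ, 𝓟 (D F)) ≤ 𝓟 (D F) := iInf_le _ F
    exact (@Ultrafilter.of_le _ _ hNeBot) (h1 (Filter.mem_principal_self _))
  have hvPos : Pos ∈ v := mem_of_superset (hvD ∅) (fun x hx => hx.1)
  have hvT : ∀ n : ℕ, 0 < n → {m | m * n ∈ T} ∈ v := by
    intro n hn
    exact mem_of_superset (hvD {n}) (fun x hx => hx.2 n (Finset.mem_singleton_self n) hn)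
  -- combine
  set r : Ultrafilter ℕ := umul Qstar v with hr
  have hrPos : Pos ∈ r := pos_mem_umul hQPos hvPos
  -- syndeticity: find the dilation i₀
  have hcover : Pos ⊆ ⋃ i ∈ Finset.Icc 1 Kc, {x | x * i ∈ S} := by
    intro x hx
    obtain ⟨i, hi1, hiK, hiS⟩ := hSynd x hx
    exact Set.mem_biUnion (Finset.mem_Icc.mpr ⟨hi1, hiK⟩) hiS
  have hUnion : (⋃ i ∈ (Finset.Icc 1 Kc : Finset ℕ), {x | x * i ∈ S}) ∈ r :=
    mem_of_superset hrPos hcover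
  have : ∃ i ∈ (Finset.Icc 1 Kc : Finset ℕ), {x | x * i ∈ S} ∈ r := by
    have := (Ultrafilter.finite_biUnion_mem_iff
      (Finset.Icc 1 Kc : Finset ℕ).finite_toSet).mp (by
        simpa using hUnion)
    simpa using this
  obtain ⟨i₀, hi₀mem, hi₀S⟩ := this
  have hi₀pos : 0 < i₀ := (Finset.mem_Icc.mp hi₀mem).1
  set p : Ultrafilter ℕ := umul r (pure i₀) with hp
  have hmem_p : ∀ B : Set ℕ, B ∈ p ↔ {n | n * i₀ ∈ B} ∈ r := by
    intro B
    rw [hp, mem_umul]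
    have : {n | {m | n * m ∈ B} ∈ (pure i₀ : Ultrafilter ℕ)} = {n | n * i₀ ∈ B} := by
      ext n; simp [Ultrafilter.mem_pure]
    rw [this]
  have hpS : S ∈ p := (hmem_p S).mpr hi₀S
  have hpT : T ∈ p := by
    rw [hmem_p, hr, mem_umul]
    filter_upwards [hQPos] with n hn
    have : {m | m * (n * i₀) ∈ T} ∈ v := hvT _ (Nat.mul_pos hn hi₀pos)
    apply mem_of_superset this
    intro m hm
    have : n * m * i₀ = m * (n * i₀) := by ring
    simpa [this] using hm
  have hpPos : Pos ∈ p := pos_mem_umul hrPos (Ultrafilter.mem_pure.mpr hi₀pos)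
  have hpRich : ∀ i, Rich (P i) p :=
    fun i => Rich.umul_right (hhom i)
      (Rich.umul_right (hhom i) (hQRich i) hvPos) (Ultrafilter.mem_pure.mpr hi₀pos)
  -- the sets of good first entries
  let Agood : Fin N → Set ℕ := fun i =>
    {b | ∃ a : Fin (k i) → ℕ, (∀ j, 0 < a j ∧ a j ∈ S ∩ T) ∧ a ⟨0, hk i⟩ = b ∧
      MvPolynomial.eval (fun j => (a j : ℤ)) (P i) = 0}
  have hAgood : ∀ i, Agood i ∈ p := by
    intro i
    by_contra hnot
    have hcompl : (Agood i)ᶜ ∈ p := Ultrafilter.compl_mem_iff_notMem.mpr hnot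
    have hC : (S ∩ T ∩ (Agood i)ᶜ) ∈ p := inter_mem (inter_mem hpS hpT) hcompl
    obtain ⟨a, ha, heval⟩ := hpRich i _ hC
    have hfirst : a ⟨0, hk i⟩ ∈ Agood i :=
      ⟨a, fun j => ⟨(ha j).1, (ha j).2.1⟩, rfl, heval⟩
    exact (ha ⟨0, hk i⟩).2.2 hfirst
  have hfinal : (S ∩ T ∩ Pos ∩ ⋂ i : Fin N, Agood i) ∈ p :=
    inter_mem (inter_mem (inter_mem hpS hpT) hpPos) (iInter_mem.mpr hAgood)
  obtain ⟨b, hb⟩ := Ultrafilter.nonempty_of_mem hfinal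
  obtain ⟨⟨⟨hbS, hbT⟩, hbPos⟩, hbAgood⟩ := hb
  rw [Set.mem_iInter] at hbAgood
  exact ⟨b, hbPos, ⟨hbS, hbT⟩, fun i => by
    obtain ⟨a, ha, hfirst, heval⟩ := hbAgood i
    exact ⟨a, ha, hfirst, heval⟩⟩
end

section
/- For every c ∈ ℕ (c > 0) and every d ∈ ℤ, the Diophantine equation c·x − c·y − d·z = 0 is partition regular on ℕ: for every finite coloring of ℕ there exist x, y, z ∈ ℕ of the same color with c·x − c·y − d·z = 0. -/
/-!
For `d ≠ 0` it suffices to find, in every finite colouring, a monochromatic triple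
`a, a + p m, q m` with `p = |d|` and `q = c`: then `(x, y, z)` is `(a + p m, a, q m)` or
`(a, a + p m, q m)` according to the sign of `d`.

Such triples are found by induction on the number of colours used on an initial segment
`[1, N]`. Take a monochromatic progression `b, b + t, …, b + p q N t` (finitary van der Waerden,
obtained from Mathlib's infinitary version by an ultrafilter compactness argument). If some
`q t j` with `1 ≤ j ≤ N` has the colour of `b`, then `(b, t j)` is a triple; otherwise the
colouring `n ↦ C (q t n)` misses that colour on `[1, N]`, and a triple for it, scaled by `q t`,
is a triple for `C`.
-/

open Filter Finset

theorem Ultrafilter.exists_eventually_eq {α κ : Type*} [Finite κ] (U : Ultrafilter α)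
    (f : α → κ) :
    ∃ c, ∀ᶠ x in U, f x = c := by
  obtain ⟨c, hc⟩ := (U.map f).eq_pure_of_finite
  exact ⟨c, Ultrafilter.mem_map.1 (hc ▸ rfl : {c} ∈ U.map f)⟩

theorem exists_bound_mono_arithProg (κ : Type*) [Finite κ] (L : ℕ) :
    ∃ W, ∀ C : ℕ → κ, ∃ b t, 0 < b ∧ 0 < t ∧ b + L * t ≤ W ∧
      ∀ j ≤ L, C (b + j * t) = C b := by
  by_contra! h
  choose D hD using h
  -- `D W` has no short progression below `W`; its ultrafilter limit `C` has none at all.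
  obtain ⟨C, hC⟩ : ∃ C : ℕ → κ, ∀ n, ∀ᶠ W in hyperfilter ℕ, D W n = C n :=
    ⟨_, fun n => ((hyperfilter ℕ).exists_eventually_eq (D · n)).choose_spec⟩
  obtain ⟨t, ht, b, c, hmono⟩ :=
    Combinatorics.exists_mono_homothetic_copy (range (L + 1)) (fun n => C (n + 1))
  have hAP : ∀ j ≤ L, C (b + 1 + j * t) = c := fun j hj => by
    rw [← hmono j (mem_range_succ_iff.2 hj), smul_eq_mul]
    ring_nf
  have hfar : ∀ᶠ W in hyperfilter ℕ, b + 1 + L * t ≤ W ∧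
      ∀ j ∈ range (L + 1), D W (b + 1 + j * t) = C (b + 1 + j * t) :=
    ((eventually_ge_atTop _).filter_mono Nat.hyperfilter_le_atTop).and
      ((eventually_all_finset _).2 fun j _ => hC _)
  obtain ⟨W, hW, hDC⟩ := hfar.exists
  obtain ⟨j, hj, hne⟩ := hD W (b + 1) t b.succ_pos ht hW
  have hc0 : D W (b + 1) = c := by simpa using (hDC 0 (by simp)).trans (hAP 0 L.zero_le)
  exact hne (by rw [hDC j (mem_range_succ_iff.2 hj), hAP j hj, hc0])

variable {κ : Type*}

def IsMonoTriple (p q : ℕ) (C : ℕ → κ) (a m : ℕ) : Prop :=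
  0 < a ∧ 0 < m ∧ C a = C (a + p * m) ∧ C a = C (q * m)

theorem IsMonoTriple.of_comp_mul {p q k a m : ℕ} {C : ℕ → κ} (hk : 0 < k)
    (h : IsMonoTriple p q (fun n => C (k * n)) a m) : IsMonoTriple p q C (k * a) (k * m) := by
  obtain ⟨ha, hm, h₁, h₂⟩ := h
  refine ⟨Nat.mul_pos hk ha, Nat.mul_pos hk hm, ?_, ?_⟩
  · rwa [mul_left_comm, ← mul_add]
  · rwa [mul_left_comm]

theorem exists_bound_isMonoTriple [Finite κ] {p q : ℕ} (hp : 0 < p) (hq : 0 < q) (s : ℕ) :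
    ∃ N, ∀ S : Finset κ, #S ≤ s → ∀ C : ℕ → κ, (∀ n ∈ Icc 1 N, C n ∈ S) →
      ∃ a m, IsMonoTriple p q C a m ∧ a + p * m ≤ N ∧ q * m ≤ N := by
  classical
  induction s with
  | zero =>
    refine ⟨1, fun S hS C hC => ?_⟩
    rw [Nat.le_zero, card_eq_zero] at hS
    simpa [hS] using hC 1
  | succ s ih =>
    obtain ⟨N, hN⟩ := ih
    obtain ⟨W, hW⟩ := exists_bound_mono_arithProg κ (p * q * N)
    refine ⟨W, fun S hS C hC => ?_⟩
    obtain ⟨b, t, hb, ht, hbW, hAP⟩ := hW C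
    have hqt : ∀ j ≤ N, q * t * j ≤ W := fun j hj =>
      calc q * t * j ≤ q * t * N := Nat.mul_le_mul_left _ hj
        _ ≤ p * (q * t * N) := Nat.le_mul_of_pos_left _ hp
        _ = p * q * N * t := by ring
        _ ≤ W := by omega
    by_cases hk : ∃ j ∈ Icc 1 N, C (q * t * j) = C b
    · obtain ⟨j, hj, hjb⟩ := hk
      rw [mem_Icc] at hj
      have hpj : p * j ≤ p * q * N :=
        mul_assoc p q N ▸ Nat.mul_le_mul_left p (hj.2.trans (Nat.le_mul_of_pos_left N hq))
      refine ⟨b, t * j, ⟨hb, Nat.mul_pos ht hj.1, ?_, ?_⟩, ?_, ?_⟩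
      · rw [show p * (t * j) = p * j * t by ring, hAP _ hpj]
      · rw [← mul_assoc, hjb]
      · calc b + p * (t * j) = b + p * j * t := by ring
          _ ≤ W := by nlinarith
      · rw [← mul_assoc]; exact hqt j hj.2
    · push Not at hk
      have hS' : #(S.erase (C b)) ≤ s := by
        have := card_erase_of_mem (hC b (mem_Icc.2 ⟨hb, by omega⟩))
        omega
      have hscaled : ∀ n ∈ Icc 1 N, C (q * t * n) ∈ S.erase (C b) := fun n hn => by
        refine mem_erase.2 ⟨hk n hn, hC _ (mem_Icc.2 ⟨?_, hqt n (mem_Icc.1 hn).2⟩)⟩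
        exact Nat.mul_pos (Nat.mul_pos hq ht) (mem_Icc.1 hn).1
      obtain ⟨a, m, hmono, ha, hm⟩ := hN _ hS' (fun n => C (q * t * n)) hscaled
      refine ⟨_, _, hmono.of_comp_mul (Nat.mul_pos hq ht), ?_, ?_⟩
      · rw [mul_left_comm, ← mul_add]; exact hqt _ ha
      · rw [mul_left_comm]; exact hqt _ hm

theorem exists_isMonoTriple [Finite κ] {p q : ℕ} (hp : 0 < p) (hq : 0 < q) (C : ℕ → κ) :
    ∃ a m, IsMonoTriple p q C a m := by
  have := Fintype.ofFinite κ
  obtain ⟨N, hN⟩ := exists_bound_isMonoTriple (κ := κ) hp hq (Fintype.card κ)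
  obtain ⟨a, m, h, -⟩ := hN univ le_rfl C fun n _ => mem_univ _
  exact ⟨a, m, h⟩

/-- For every `c > 0` and every `d ∈ ℤ`, the equation `c·x - c·y - d·z = 0` is
partition regular on the positive integers. -/
theorem eq_cx_sub_cy_sub_dz_partition_regular (c : ℕ) (hc : 0 < c) (d : ℤ)
    (r : ℕ) (C : ℕ → Fin r) :
    ∃ x y z : ℕ, 0 < x ∧ 0 < y ∧ 0 < z ∧
      C x = C y ∧ C y = C z ∧
      (c : ℤ) * x - (c : ℤ) * y - d * z = 0 := by
  obtain ⟨p, hd⟩ := d.eq_nat_or_neg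
  obtain rfl | hp := p.eq_zero_or_pos
  · exact ⟨1, 1, 1, one_pos, one_pos, one_pos, rfl, rfl, by rcases hd with rfl | rfl <;> simp⟩
  obtain ⟨a, m, ha, hm, h₁, h₂⟩ := exists_isMonoTriple hp hc C
  have hz : 0 < c * m := Nat.mul_pos hc hm
  rcases hd with rfl | rfl
  · refine ⟨a + p * m, a, c * m, by omega, ha, hz, h₁.symm, h₂, ?_⟩
    push_cast; ring
  · refine ⟨a, a + p * m, c * m, ha, by omega, hz, h₁, h₁ ▸ h₂, ?_⟩
    push_cast; ring
end

section
/- Rado's theorem (sufficiency): if c₁,…,c_k ∈ ℤ are nonzero and there exists a nonempty subset I ⊆ {1,…,k} with ∑_{i∈I} cᵢ = 0, then the equation ∑_{i=1}^k cᵢ xᵢ = 0 is partition regular on ℕ: for every finite coloring of ℕ there exist x₁,…,x_k ∈ ℕ all of the same color with ∑_{i=1}^k cᵢ xᵢ = 0. -/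
/-!
Take `i₀ ∈ I`, put `c₀ = c i₀`, `s = ∑_{i ∉ I} cᵢ` and `q = c₀²`. If `v, w, q t` have the same
color and `w - v = -s c₀ t`, then `x_{i₀} = w`, `xᵢ = v` on `I \ {i₀}` and `xᵢ = q t` off `I`
solves the equation, because `∑_{i ∈ I \ {i₀}} cᵢ = -c₀`. So it suffices to find, for every `m`
and `q > 0`, monochromatic `a, a + m t, q t` with `a, t > 0` (Brauer) and to take
`{v, w} = {a, a + m t}` with `m = |s c₀|`. This goes by induction on the number of
colors: by compactness the induction hypothesis holds inside a fixed window `[1, M]`; van der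
Waerden gives a monochromatic progression `b + d j` (`j ≤ 1 + m M`) of color `c`. Either some
`q d i` with `0 < i ≤ M` has color `c`, and `a = b + d`, `t = d i` works, or the numbers
`q d i` with `0 < i ≤ M` avoid `c`, and the induction hypothesis applied to `i ↦ color of q d i`
yields a configuration which, scaled by `q d`, is the required one.
-/

open Finset

theorem exists_finset_of_forall_exists_mono {α κ : Type*} [Finite κ] (S : Set (Finset α))
    (h : ∀ C : α → κ, ∃ s ∈ S, ∃ c, ∀ x ∈ s, C x = c) :
    ∃ T : Finset α, ∀ C : α → κ, ∃ s ∈ S, s ⊆ T ∧ ∃ c, ∀ x ∈ s, C x = c := by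
  classical
  let _ : TopologicalSpace κ := ⊥
  have : DiscreteTopology κ := ⟨rfl⟩
  let U (s : Finset α) : Set (α → κ) := {C | ∃ c, ∀ x ∈ s, C x = c}
  have hU (s : Finset α) : IsOpen (U s) := by
    have : U s = ⋃ c, ⋂ x ∈ s, (fun C : α → κ => C x) ⁻¹' {c} := by ext; simp [U]
    rw [this]
    exact isOpen_iUnion fun c => isOpen_biInter_finset fun x _ =>
      (isOpen_discrete {c}).preimage (continuous_apply x)
  obtain ⟨S', hS'S, hS'fin, hcover⟩ :=
    isCompact_univ.elim_finite_subcover_image (b := S) (c := U) (fun s _ => hU s)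
      fun C _ => by simpa [U] using h C
  refine ⟨hS'fin.toFinset.sup id, fun C => ?_⟩
  obtain ⟨s, hs, hCs⟩ := Set.mem_iUnion₂.mp (hcover (Set.mem_univ C))
  exact ⟨s, hS'S hs, le_sup (f := id) (hS'fin.mem_toFinset.mpr hs), hCs⟩

def brauerConfig (m q a t : ℕ) : Finset ℕ := {a, a + m * t, q * t}

theorem brauerConfig_mul (m q k a t : ℕ) :
    brauerConfig m q (k * a) (k * t) = (brauerConfig m q a t).image (k * ·) := by
  simp only [brauerConfig, image_insert, image_singleton]
  ring_nf

theorem pos_of_mem_brauerConfig {m q a t x : ℕ} (hq : 0 < q) (ha : 0 < a) (ht : 0 < t)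
    (hx : x ∈ brauerConfig m q a t) : 0 < x := by
  simp only [brauerConfig, mem_insert, mem_singleton] at hx
  rcases hx with rfl | rfl | rfl <;> positivity

theorem exists_mono_brauerConfig (m : ℕ) {q : ℕ} (hq : 0 < q) :
    ∀ {r : ℕ} (C : ℕ → Fin r), ∃ a t, 0 < a ∧ 0 < t ∧
      ∃ c, ∀ x ∈ brauerConfig m q a t, C x = c
  | 0, C => (C 0).elim0
  | 1, C => ⟨1, 1, one_pos, one_pos, 0, fun _ _ => Subsingleton.elim _ _⟩
  | n + 2, C => by
    obtain ⟨T, hT⟩ := exists_finset_of_forall_exists_mono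
      {s | ∃ a t, 0 < a ∧ 0 < t ∧ s = brauerConfig m q a t}
      fun C' =>
        have ⟨a, t, ha, ht, hmono⟩ := exists_mono_brauerConfig m hq (r := n + 1) C'
        ⟨_, ⟨a, t, ha, ht, rfl⟩, hmono⟩
    set M := T.sup id
    obtain ⟨d, hd, b, c, hprog⟩ :=
      Combinatorics.exists_mono_homothetic_copy (range (1 + m * M + 1)) C
    simp only [mem_range, smul_eq_mul, Order.lt_add_one_iff] at hprog
    by_cases hmult : ∃ i, 0 < i ∧ i ≤ M ∧ C (q * (d * i)) = c
    · obtain ⟨i, hi, hiM, hCi⟩ := hmult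
      refine ⟨d * 1 + b, d * i, by positivity, by positivity, c, ?_⟩
      simp only [brauerConfig, mem_insert, mem_singleton]
      rintro x (rfl | rfl | rfl)
      · exact hprog 1 (by omega)
      · rw [show d * 1 + b + m * (d * i) = d * (1 + m * i) + b by ring]
        exact hprog _ (by gcongr)
      · exact hCi
    · push Not at hmult
      obtain ⟨s, ⟨a, t, ha, ht, rfl⟩, hsT, c', hc'⟩ :=
        hT fun i => Function.invFun c.succAbove (C (q * (d * i)))
      refine ⟨q * d * a, q * d * t, by positivity, by positivity, c.succAbove c', ?_⟩
      rw [brauerConfig_mul, forall_mem_image]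
      intro x hx
      have hCx : C (q * (d * x)) ≠ c :=
        hmult x (pos_of_mem_brauerConfig hq ha ht hx) (le_sup (f := id) (hsT hx))
      rw [← hc' x hx, Function.invFun_eq (Fin.exists_succAbove_eq hCx), mul_assoc]

theorem exists_mono_sub_eq_mul (u : ℤ) {q : ℕ} (hq : 0 < q) {r : ℕ} (C : ℕ → Fin r) :
    ∃ v w t : ℕ, 0 < v ∧ 0 < w ∧ 0 < t ∧ (w : ℤ) - v = u * t ∧
      ∃ c, C v = c ∧ C w = c ∧ C (q * t) = c := by
  obtain ⟨a, t, ha, ht, c, hc⟩ := exists_mono_brauerConfig u.natAbs hq C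
  simp only [brauerConfig, mem_insert, mem_singleton, forall_eq_or_imp, forall_eq] at hc
  obtain ⟨hCa, hCb, hCq⟩ := hc
  rcases le_or_gt 0 u with hu | hu
  · exact ⟨a, a + u.natAbs * t, t, ha, by positivity, ht,
      by push_cast; rw [abs_of_nonneg hu]; ring, c, hCa, hCb, hCq⟩
  · exact ⟨a + u.natAbs * t, a, t, by positivity, ha, ht,
      by push_cast; rw [abs_of_neg hu]; ring, c, hCb, hCa, hCq⟩

theorem sum_mul_eq_of_sum_eq_zero {ι R : Type*} [Fintype ι] [DecidableEq ι] [CommRing R]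
    {c x : ι → R} {I : Finset ι} {i₀ : ι} (hi₀ : i₀ ∈ I) (hI : ∑ i ∈ I, c i = 0) {v w y : R}
    (hx₀ : x i₀ = w) (hxI : ∀ i ∈ I.erase i₀, x i = v) (hxIc : ∀ i ∈ Iᶜ, x i = y) :
    ∑ i, c i * x i = c i₀ * (w - v) + (∑ i ∈ Iᶜ, c i) * y := by
  have hIerase : ∑ i ∈ I.erase i₀, c i = -c i₀ := by
    rw [sum_erase_eq_sub hi₀, hI, zero_sub]
  have hsumI : ∑ i ∈ I.erase i₀, c i * x i = -c i₀ * v := by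
    rw [sum_congr rfl fun i hi => by rw [hxI i hi], ← sum_mul, hIerase]
  have hsumIc : ∑ i ∈ Iᶜ, c i * x i = (∑ i ∈ Iᶜ, c i) * y := by
    rw [sum_congr rfl fun i hi => by rw [hxIc i hi], ← sum_mul]
  rw [← sum_add_sum_compl I, ← add_sum_erase I _ hi₀, hsumI, hsumIc, hx₀]
  ring

/-- Rado's theorem (sufficiency of Rado's condition): if the nonzero integer
coefficients `c₁,…,c_k` have a nonempty partial sum equal to zero, then the equation
`∑ cᵢ xᵢ = 0` is partition regular on the positive integers. -/
theorem rado_sufficiency (k : ℕ) (c : Fin k → ℤ) (hc : ∀ i, c i ≠ 0)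
    (hRado : ∃ I : Finset (Fin k), I.Nonempty ∧ ∑ i ∈ I, c i = 0)
    (r : ℕ) (C : ℕ → Fin r) :
    ∃ x : Fin k → ℕ, (∀ i, 0 < x i) ∧
      (∃ j : Fin r, ∀ i, C (x i) = j) ∧
      ∑ i, c i * (x i : ℤ) = 0 := by
  obtain ⟨I, ⟨i₀, hi₀⟩, hI⟩ := hRado
  set s := ∑ i ∈ Iᶜ, c i
  set q := (c i₀).natAbs ^ 2
  have hq : 0 < q := by positivity [hc i₀]
  obtain ⟨v, w, t, hv, hw, ht, hwv, j, hCv, hCw, hCq⟩ := exists_mono_sub_eq_mul (-(s * c i₀)) hq C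
  let x (i : Fin k) : ℕ := if i = i₀ then w else if i ∈ I then v else q * t
  refine ⟨x, fun i => ?_, ⟨j, fun i => ?_⟩, ?_⟩
  · unfold x; split_ifs <;> positivity
  · unfold x; split_ifs <;> assumption
  · have hxIc (i) (hi : i ∈ Iᶜ) : (x i : ℤ) = (q * t : ℕ) := by
      have hi' : i ∉ I := mem_compl.mp hi
      simp [x, hi', ne_of_mem_of_not_mem hi₀ hi' |>.symm]
    rw [sum_mul_eq_of_sum_eq_zero hi₀ hI (v := (v : ℤ)) (w := (w : ℤ)) (by simp [x])
      (fun i hi => by simp [x, ne_of_mem_erase hi, mem_of_mem_erase hi]) hxIc, hwv]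
    push_cast [q]
    rw [sq_abs]
    ring
end
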